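/- arXiv:1910.06888 — 6 statements merged into one kernel-verified Lean document; each statement's English description precedes it below -/
import Mathlib

section
/- There are only finitely many right perfect triangles up to similarity. Concretely: the set of rationals a > 0 for which there exist rationals m₁, m₂, m₃ with 4m₁² = 4a² + 1, 4m₂² = a² + 1 and 4m₃² = a² + 4 is finite. -/
lemma three_dvd_both {a d : ℕ} (h : 3 ∣ a^2 + d^2) : 3 ∣ a ∧ 3 ∣ d := by
  have key : ∀ x y : ZMod 3, x^2 + y^2 = 0 → x = 0 ∧ y = 0 := by decide
  have hc : ((a:ZMod 3))^2 + (d:ZMod 3)^2 = 0 := by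
    have : (((a^2+d^2 : ℕ)) : ZMod 3) = 0 := (ZMod.natCast_eq_zero_iff _ 3).mpr h
    push_cast at this; exact this
  obtain ⟨h1, h2⟩ := key _ _ hc
  exact ⟨(ZMod.natCast_eq_zero_iff _ 3).mp h1, (ZMod.natCast_eq_zero_iff _ 3).mp h2⟩

lemma four_split {S M T N : ℕ} (hS : 0 < S) (hM : 0 < M) (hT : 0 < T)
    (h : S * T = M * N) :
    ∃ a b c d, S = a*b ∧ M = a*c ∧ T = c*d ∧ N = b*d ∧ Nat.Coprime b c ∧
      0 < a ∧ 0 < b ∧ 0 < c ∧ 0 < d := by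
  set a := Nat.gcd S M with ha
  have hapos : 0 < a := Nat.gcd_pos_of_pos_left _ hS
  obtain ⟨b, hb⟩ := Nat.gcd_dvd_left S M
  obtain ⟨c, hc⟩ := Nat.gcd_dvd_right S M
  have hbpos : 0 < b := Nat.pos_of_ne_zero (by rintro rfl; rw [mul_zero] at hb; omega)
  have hcpos : 0 < c := Nat.pos_of_ne_zero (by rintro rfl; rw [mul_zero] at hc; omega)
  have hbc : Nat.Coprime b c := by
    have h1 : b = S / a := by rw [hb]; exact (Nat.mul_div_cancel_left _ hapos).symm
    have h2 : c = M / a := by rw [hc]; exact (Nat.mul_div_cancel_left _ hapos).symm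
    rw [h1, h2, ha]
    exact Nat.coprime_div_gcd_div_gcd hapos
  have key : b * T = c * N := by
    have : a * (b * T) = a * (c * N) := by rw [← mul_assoc, ← mul_assoc, ← hb, ← hc]; exact h
    exact Nat.eq_of_mul_eq_mul_left hapos this
  have hcT : c ∣ T := (Nat.Coprime.dvd_of_dvd_mul_left hbc.symm) ⟨N, key⟩
  obtain ⟨d, hd⟩ := hcT
  have hN : N = b * d := by
    have : c * (b * d) = c * N := by rw [show c*(b*d) = b*(c*d) by ring, ← hd]; exact key
    exact (Nat.eq_of_mul_eq_mul_left hcpos this).symm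
  have hdpos : 0 < d := by
    rcases Nat.eq_zero_or_pos d with h0 | h0
    · exfalso; rw [h0, mul_zero] at hd; omega
    · exact h0
  exact ⟨a, b, c, d, hb, hc, hd, hN, hbc, hapos, hbpos, hcpos, hdpos⟩

/-- Core of the Euler descent, odd case. -/
lemma odd_core {P Q M N S T : ℕ} (hQpos : 0 < Q)
    (hQMN : Q = 2*(M*N)) (hQST : Q = S*T)
    (hMsq : M^2 = P + N^2) (hSsq : S^2 = P + T^2)
    (hcoMN : Nat.Coprime M N) (hcoST : Nat.Coprime S T) :
    ∃ x y U V : ℕ, 0 < x ∧ 0 < y ∧ Nat.Coprime x y ∧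
      x^2 + y^2 = U^2 ∧ x^2 + 4*y^2 = V^2 ∧ x*y ≤ M*N := by
  have hMpos : 0 < M := Nat.pos_of_ne_zero (by rintro rfl; simp at hQMN; omega)
  have hNpos : 0 < N := Nat.pos_of_ne_zero (by rintro rfl; simp at hQMN; omega)
  have hSpos : 0 < S := Nat.pos_of_ne_zero (by rintro rfl; simp at hQST; omega)
  have hTpos : 0 < T := Nat.pos_of_ne_zero (by rintro rfl; simp at hQST; omega)
  have hEq : M^2 + T^2 = S^2 + N^2 := by linarith [hMsq, hSsq]
  have hQe : 2 ∣ Q := ⟨M*N, hQMN⟩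
  have hSTe : 2 ∣ S ∨ 2 ∣ T := (Nat.prime_two.dvd_mul).mp (by rw [← hQST]; exact hQe)
  have hnotboth : ¬ (2 ∣ S ∧ 2 ∣ T) := by
    rintro ⟨hs2, ht2⟩
    have : 2 ∣ Nat.gcd S T := Nat.dvd_gcd hs2 ht2
    rw [hcoST] at this; omega
  rcases hSTe with hSe | hTe
  · -- S even: new pair (d, a)
    obtain ⟨S', hS'⟩ := hSe
    have hS'pos : 0 < S' := by omega
    have hsplit : S' * T = M * N := by
      have : 2 * (S' * T) = 2 * (M * N) := by rw [← hQMN, hQST, hS']; ring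
      omega
    obtain ⟨a, b, c, d, hab, hac, hcd, hbd, hbc, hapos, hbpos, hcpos, hdpos⟩ :=
      four_split hS'pos hMpos hTpos hsplit
    have key : c^2*(a^2+d^2) = b^2*(4*a^2+d^2) := by
      have hEq' : (a*c)^2 + (c*d)^2 = (2*(a*b))^2 + (b*d)^2 := by
        rw [← hac, ← hcd, ← hab, ← hbd]
        have h2S : S^2 = (2*(S'))^2 := by rw [hS']
        omega
      zify at hEq' ⊢
      linear_combination hEq'
    have hbdvd : b^2 ∣ a^2 + d^2 := by
      have h' : b^2 ∣ c^2 * (a^2+d^2) := ⟨4*a^2+d^2, key⟩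
      exact (Nat.Coprime.pow 2 2 hbc).dvd_of_dvd_mul_left h'
    obtain ⟨j, hj⟩ := hbdvd
    have hjc : 4*a^2 + d^2 = c^2 * j := by
      have h' : b^2 * (c^2 * j) = b^2 * (4*a^2+d^2) := by
        calc b^2 * (c^2*j) = c^2 * (b^2*j) := by ring
        _ = c^2 * (a^2+d^2) := by rw [← hj]
        _ = b^2*(4*a^2+d^2) := key
      exact (Nat.eq_of_mul_eq_mul_left (by positivity) h').symm
    have hcoad : Nat.Coprime a d :=
      Nat.Coprime.coprime_dvd_left ⟨c, hac⟩
        (Nat.Coprime.coprime_dvd_right ⟨b, by rw [hbd]; ring⟩ hcoMN)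
    have hj3 : j ∣ 3 := by
      have e1 : ((a:ℤ)^2+(d:ℤ)^2) = (b:ℤ)^2*j := by exact_mod_cast hj
      have e2 : (4*(a:ℤ)^2+(d:ℤ)^2) = (c:ℤ)^2*j := by exact_mod_cast hjc
      have hja : j ∣ 3*a^2 := by
        have : ((3*a^2 : ℕ):ℤ) = (j:ℤ) * ((c:ℤ)^2 - (b:ℤ)^2) := by push_cast; linear_combination e2 - e1
        exact Int.ofNat_dvd_right.mp ⟨_, this⟩
      have hjd : j ∣ 3*d^2 := by
        have : ((3*d^2 : ℕ):ℤ) = (j:ℤ) * (4*(b:ℤ)^2 - (c:ℤ)^2) := by push_cast; linear_combination 4*e1 - e2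
        exact Int.ofNat_dvd_right.mp ⟨_, this⟩
      have : j ∣ Nat.gcd (3*a^2) (3*d^2) := Nat.dvd_gcd hja hjd
      rwa [Nat.gcd_mul_left, Nat.Coprime.pow 2 2 hcoad, mul_one] at this
    have hj1 : j = 1 := by
      rcases (Nat.Prime.eq_one_or_self_of_dvd Nat.prime_three j hj3) with h1 | h1
      · exact h1
      · exfalso
        subst h1
        have h3 : 3 ∣ a^2 + d^2 := by rw [hj]; exact ⟨b^2, by ring⟩
        obtain ⟨h3a, h3d⟩ := three_dvd_both h3
        have : 3 ∣ Nat.gcd a d := Nat.dvd_gcd h3a h3d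
        rw [hcoad] at this; omega
    refine ⟨d, a, b, c, hdpos, hapos, hcoad.symm, ?_, ?_, ?_⟩
    · rw [hj1, mul_one] at hj; omega
    · rw [hj1, mul_one] at hjc; omega
    · calc d * a = a * d := by ring
      _ ≤ M * N := Nat.mul_le_mul (Nat.le_of_dvd hMpos ⟨c, hac⟩) (Nat.le_of_dvd hNpos ⟨b, by rw [hbd]; ring⟩)
  · -- T even: new pair (a, d)
    obtain ⟨T', hT'⟩ := hTe
    have hT'pos : 0 < T' := by omega
    have hsplit : S * T' = M * N := by
      have : 2 * (S * T') = 2 * (M * N) := by rw [← hQMN, hQST, hT']; ring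
      omega
    obtain ⟨a, b, c, d, hab, hac, hcd, hbd, hbc, hapos, hbpos, hcpos, hdpos⟩ :=
      four_split hSpos hMpos hT'pos hsplit
    have key : c^2*(a^2+4*d^2) = b^2*(a^2+d^2) := by
      have hEq' : (a*c)^2 + (2*(c*d))^2 = (a*b)^2 + (b*d)^2 := by
        rw [← hac, ← hcd, ← hab, ← hbd]
        have h2T : T^2 = (2*(T'))^2 := by rw [hT']
        omega
      zify at hEq' ⊢
      linear_combination hEq'
    have hbdvd : b^2 ∣ a^2 + 4*d^2 := by
      have h' : b^2 ∣ c^2 * (a^2+4*d^2) := ⟨a^2+d^2, key⟩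
      exact (Nat.Coprime.pow 2 2 hbc).dvd_of_dvd_mul_left h'
    obtain ⟨j, hj⟩ := hbdvd
    have hjc : a^2 + d^2 = c^2 * j := by
      have h' : b^2 * (c^2 * j) = b^2 * (a^2+d^2) := by
        calc b^2 * (c^2*j) = c^2 * (b^2*j) := by ring
        _ = c^2 * (a^2+4*d^2) := by rw [← hj]
        _ = b^2*(a^2+d^2) := key
      exact (Nat.eq_of_mul_eq_mul_left (by positivity) h').symm
    have hcoad : Nat.Coprime a d :=
      Nat.Coprime.coprime_dvd_left ⟨c, hac⟩
        (Nat.Coprime.coprime_dvd_right ⟨b, by rw [hbd]; ring⟩ hcoMN)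
    have hj3 : j ∣ 3 := by
      have e1 : ((a:ℤ)^2+4*(d:ℤ)^2) = (b:ℤ)^2*j := by exact_mod_cast hj
      have e2 : ((a:ℤ)^2+(d:ℤ)^2) = (c:ℤ)^2*j := by exact_mod_cast hjc
      have hja : j ∣ 3*a^2 := by
        have : ((3*a^2 : ℕ):ℤ) = (j:ℤ) * (4*(c:ℤ)^2 - (b:ℤ)^2) := by push_cast; linear_combination 4*e2 - e1
        exact Int.ofNat_dvd_right.mp ⟨_, this⟩
      have hjd : j ∣ 3*d^2 := by
        have : ((3*d^2 : ℕ):ℤ) = (j:ℤ) * ((b:ℤ)^2 - (c:ℤ)^2) := by push_cast; linear_combination e1 - e2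
        exact Int.ofNat_dvd_right.mp ⟨_, this⟩
      have : j ∣ Nat.gcd (3*a^2) (3*d^2) := Nat.dvd_gcd hja hjd
      rwa [Nat.gcd_mul_left, Nat.Coprime.pow 2 2 hcoad, mul_one] at this
    have hj1 : j = 1 := by
      rcases (Nat.Prime.eq_one_or_self_of_dvd Nat.prime_three j hj3) with h1 | h1
      · exact h1
      · exfalso
        subst h1
        have h3 : 3 ∣ a^2 + d^2 := by rw [hjc]; exact ⟨c^2, by ring⟩
        obtain ⟨h3a, h3d⟩ := three_dvd_both h3
        have : 3 ∣ Nat.gcd a d := Nat.dvd_gcd h3a h3d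
        rw [hcoad] at this; omega
    refine ⟨a, d, c, b, hapos, hdpos, hcoad, ?_, ?_, ?_⟩
    · rw [hj1, mul_one] at hjc; omega
    · rw [hj1, mul_one] at hj; omega
    · exact Nat.mul_le_mul (Nat.le_of_dvd hMpos ⟨c, hac⟩) (Nat.le_of_dvd hNpos ⟨b, by rw [hbd]; ring⟩)


lemma sq_add_sq_even {P Q Y : ℕ} (h : P^2 + Q^2 = Y^2) : 2 ∣ P ∨ 2 ∣ Q := by
  have key : ∀ x y z : ZMod 4, x^2 + y^2 = z^2 → x^2 = 0 ∨ y^2 = 0 := by decide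
  have hc : ((P:ZMod 4))^2 + (Q:ZMod 4)^2 = (Y:ZMod 4)^2 := by
    have := congrArg (Nat.cast : ℕ → ZMod 4) h
    push_cast at this; exact this
  rcases key _ _ _ hc with h' | h'
  · left
    have h4 : 4 ∣ P^2 := by
      have : ((P^2 : ℕ) : ZMod 4) = 0 := by push_cast; exact h'
      exact (ZMod.natCast_eq_zero_iff _ 4).mp this
    have : 2 ∣ P^2 := dvd_trans (by norm_num) h4
    exact Nat.Prime.dvd_of_dvd_pow Nat.prime_two this
  · right
    have h4 : 4 ∣ Q^2 := by
      have : ((Q^2 : ℕ) : ZMod 4) = 0 := by push_cast; exact h'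
      exact (ZMod.natCast_eq_zero_iff _ 4).mp this
    have : 2 ∣ Q^2 := dvd_trans (by norm_num) h4
    exact Nat.Prime.dvd_of_dvd_pow Nat.prime_two this

set_option maxHeartbeats 1000000 in
lemma descent : ∀ K : ℕ, ∀ P Q Y Z : ℕ, P * Q ≤ K → 0 < P → 0 < Q → Nat.Coprime P Q →
    P^2 + Q^2 = Y^2 → P^2 + 4*Q^2 = Z^2 → False := by
  intro K
  induction K using Nat.strong_induction_on with
  | _ K IH =>
  intro P Q Y Z hK hP hQ hco h1 h2
  rcases sq_add_sq_even h1 with hPe | hQe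
  · -- P even : descend to (Q, P/2)
    obtain ⟨S, hS⟩ := hPe
    have hSpos : 0 < S := by omega
    have hZe : 2 ∣ Z := by
      have h4 : 2 ∣ Z^2 := by
        refine dvd_trans (by norm_num) (show 4 ∣ Z^2 from ⟨S^2 + Q^2, by rw [← h2, hS]; ring⟩)
      exact Nat.Prime.dvd_of_dvd_pow Nat.prime_two h4
    obtain ⟨T, hT⟩ := hZe
    have e1 : Q^2 + S^2 = T^2 := by nlinarith [h2, hS, hT]
    have e2 : Q^2 + 4*S^2 = Y^2 := by nlinarith [h1, hS]
    have hcoQS : Nat.Coprime Q S :=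
      Nat.Coprime.coprime_dvd_right ⟨2, by omega⟩ hco.symm
    exact IH (Q*S) (by nlinarith) Q S T Y le_rfl hQ hSpos hcoQS e1 e2
  · -- Q even, P odd
    have hPodd : P % 2 = 1 := by
      rcases Nat.even_or_odd P with he | ho
      · exfalso
        have : 2 ∣ Nat.gcd P Q := Nat.dvd_gcd he.two_dvd hQe
        rw [hco] at this; omega
      · exact Nat.odd_iff.mp ho
    have hYpos : 0 < Y := by nlinarith
    have hZpos : 0 < Z := by nlinarith
    have t1 : PythagoreanTriple (P:ℤ) (Q:ℤ) (Y:ℤ) := by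
      have h' : ((P:ℤ))^2 + (Q:ℤ)^2 = (Y:ℤ)^2 := by exact_mod_cast h1
      show (P:ℤ)*P + (Q:ℤ)*Q = (Y:ℤ)*Y
      linear_combination h'
    have co1 : Int.gcd (P:ℤ) (Q:ℤ) = 1 := by
      rwa [Int.gcd_natCast_natCast]
    have parz : (P:ℤ) % 2 = 1 := by omega
    obtain ⟨m, n, hpmn, hqmn, -, hgmn, -, -⟩ :=
      PythagoreanTriple.coprime_classification' t1 co1 parz (by exact_mod_cast hYpos)
    have t2 : PythagoreanTriple (P:ℤ) (2*(Q:ℤ)) (Z:ℤ) := by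
      have h' : ((P:ℤ))^2 + 4*(Q:ℤ)^2 = (Z:ℤ)^2 := by exact_mod_cast h2
      show (P:ℤ)*P + (2*(Q:ℤ))*(2*Q) = (Z:ℤ)*Z
      linear_combination h'
    have co2 : Int.gcd (P:ℤ) (2*(Q:ℤ)) = 1 := by
      have hP2 : Nat.Coprime P 2 := by
        rcases Nat.coprime_or_dvd_of_prime Nat.prime_two P with h | h
        · exact h.symm
        · omega
      have hco2 : Nat.Coprime P (2*Q) := Nat.Coprime.mul_right hP2 hco
      rw [show (2*(Q:ℤ)) = ((2*Q : ℕ) : ℤ) by push_cast; ring, Int.gcd_natCast_natCast]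
      exact hco2
    obtain ⟨s, t, hpst, hqst, -, hgst, -, -⟩ :=
      PythagoreanTriple.coprime_classification' t2 co2 parz (by exact_mod_cast hZpos)
    have habs : ∀ x : ℤ, ((x.natAbs : ℤ))^2 = x^2 := fun x => by
      rw [Int.natCast_natAbs, sq_abs]
    have hQMN : Q = 2*(m.natAbs * n.natAbs) := by
      have h' : Q = ((2*m*n).natAbs) := by rw [← hqmn]; simp
      rw [h']; simp [Int.natAbs_mul, mul_assoc]
    have hQST : Q = s.natAbs * t.natAbs := by
      have hq' : (Q:ℤ) = s * t := by linarith [hqst]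
      have h' : Q = ((s*t).natAbs) := by rw [← hq']; simp
      rw [h', Int.natAbs_mul]
    have hMsq : m.natAbs^2 = P + n.natAbs^2 := by
      have h' : ((m.natAbs:ℤ))^2 = (P:ℤ) + ((n.natAbs:ℤ))^2 := by
        rw [habs, habs]; linarith [hpmn]
      exact_mod_cast h'
    have hSsq : s.natAbs^2 = P + t.natAbs^2 := by
      have h' : ((s.natAbs:ℤ))^2 = (P:ℤ) + ((t.natAbs:ℤ))^2 := by
        rw [habs, habs]; linarith [hpst]
      exact_mod_cast h'
    obtain ⟨x, y, U, V, hx, hy, hcoxy, ex1, ex2, hle⟩ :=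
      odd_core hQ hQMN hQST hMsq hSsq hgmn hgst
    have hxyK : x * y < K := by
      have h1' : m.natAbs * n.natAbs < Q := by omega
      have h2' : Q ≤ P * Q := Nat.le_mul_of_pos_left Q hP
      omega
    exact IH (x*y) hxyK x y U V le_rfl hx hy hcoxy ex1 ex2


lemma int_of_sq_int (r : ℚ) (c : ℤ) (h : r^2 = (c:ℚ)) : (r.num : ℚ) = r := by
  have hden : (r^2).den = 1 := by rw [h]; exact Rat.den_intCast c
  have : r.den ^ 2 = 1 := by rw [← Rat.den_pow]; exact hden
  have : r.den = 1 := by nlinarith [r.pos.le]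
  exact Rat.coe_int_num_of_den_eq_one this

theorem no_rat (a : ℚ) (ha : 0 < a)
    (h : ∃ m₂ m₃ : ℚ, 4 * m₂ ^ 2 = a ^ 2 + 1 ∧ 4 * m₃ ^ 2 = a ^ 2 + 4) : False := by
  obtain ⟨m₂, m₃, h2, h3⟩ := h
  have hD0 : ((a.den : ℚ)) ≠ 0 := by
    exact_mod_cast a.den_nz
  have haD : a * (a.den : ℚ) = (a.num : ℚ) := by
    rw [Rat.mul_den_eq_num]
  -- first integer square
  have e2 : (2 * m₂ * (a.den:ℚ))^2 = ((a.num^2 + (a.den:ℤ)^2 : ℤ) : ℚ) := by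
    push_cast
    calc (2 * m₂ * (a.den:ℚ))^2 = (4 * m₂^2) * (a.den:ℚ)^2 := by ring
      _ = (a^2+1) * (a.den:ℚ)^2 := by rw [h2]
      _ = (a * (a.den:ℚ))^2 + (a.den:ℚ)^2 := by ring
      _ = (a.num:ℚ)^2 + (a.den:ℚ)^2 := by rw [haD]
  have e3 : (2 * m₃ * (a.den:ℚ))^2 = ((a.num^2 + 4*(a.den:ℤ)^2 : ℤ) : ℚ) := by
    push_cast
    calc (2 * m₃ * (a.den:ℚ))^2 = (4 * m₃^2) * (a.den:ℚ)^2 := by ring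
      _ = (a^2+4) * (a.den:ℚ)^2 := by rw [h3]
      _ = (a * (a.den:ℚ))^2 + 4*(a.den:ℚ)^2 := by ring
      _ = (a.num:ℚ)^2 + 4*(a.den:ℚ)^2 := by rw [haD]
  set r := 2 * m₂ * (a.den:ℚ)
  set w := 2 * m₃ * (a.den:ℚ)
  have hr := int_of_sq_int r _ e2
  have hw := int_of_sq_int w _ e3
  have hrz : (r.num:ℚ)^2 = ((a.num^2 + (a.den:ℤ)^2 : ℤ) : ℚ) := by rw [hr]; exact e2
  have hwz : (w.num:ℚ)^2 = ((a.num^2 + 4*(a.den:ℤ)^2 : ℤ) : ℚ) := by rw [hw]; exact e3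
  have hrzi : r.num^2 = a.num^2 + (a.den:ℤ)^2 := by exact_mod_cast hrz
  have hwzi : w.num^2 = a.num^2 + 4*(a.den:ℤ)^2 := by exact_mod_cast hwz
  -- to ℕ
  have hnum : 0 < a.num := Rat.num_pos.mpr ha
  have hnumcast : ((a.num.natAbs : ℤ)) = a.num := Int.natAbs_of_nonneg hnum.le
  have habs : ∀ x : ℤ, ((x.natAbs : ℤ))^2 = x^2 := fun x => by rw [Int.natCast_natAbs, sq_abs]
  have e1n : a.num.natAbs^2 + a.den^2 = r.num.natAbs^2 := by
    have : ((a.num.natAbs:ℤ))^2 + ((a.den:ℕ):ℤ)^2 = ((r.num.natAbs:ℤ))^2 := by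
      rw [habs, habs]; linarith [hrzi]
    exact_mod_cast this
  have e2n : a.num.natAbs^2 + 4*a.den^2 = w.num.natAbs^2 := by
    have : ((a.num.natAbs:ℤ))^2 + 4*((a.den:ℕ):ℤ)^2 = ((w.num.natAbs:ℤ))^2 := by
      rw [habs, habs]; linarith [hwzi]
    exact_mod_cast this
  exact descent (a.num.natAbs * a.den) _ _ _ _ le_rfl
    (Int.natAbs_pos.mpr (by omega)) a.pos a.reduced e1n e2n

/-- **Finiteness of right perfect triangles up to similarity.**
A right perfect triangle with legs `1` and `a` has medians `m₁, m₂, m₃` satisfying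
`4m₁² = 4a² + 1`, `4m₂² = a² + 1`, `4m₃² = a² + 4`.  Only finitely many rationals
`a > 0` admit rational solutions `m₁, m₂, m₃` to these equations. -/
theorem finitely_many_right_perfect_triangles :
    {a : ℚ | 0 < a ∧ ∃ m₁ m₂ m₃ : ℚ,
      4 * m₁ ^ 2 = 4 * a ^ 2 + 1 ∧
      4 * m₂ ^ 2 = a ^ 2 + 1 ∧
      4 * m₃ ^ 2 = a ^ 2 + 4}.Finite := by
  have hempty : {a : ℚ | 0 < a ∧ ∃ m₁ m₂ m₃ : ℚ,
      4 * m₁ ^ 2 = 4 * a ^ 2 + 1 ∧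
      4 * m₂ ^ 2 = a ^ 2 + 1 ∧
      4 * m₃ ^ 2 = a ^ 2 + 4} = ∅ := by
    ext a
    simp only [Set.mem_setOf_eq, Set.mem_empty_iff_false, iff_false, not_and]
    rintro ha ⟨m₁, m₂, m₃, h1, h2, h3⟩
    exact no_rat a ha ⟨m₂, m₃, h2, h3⟩
  rw [hempty]
  exact Set.finite_empty
end

section
/- Let S ⊆ ℝ² be a rational median set containing the points (0,0) and (1,0). Then there exists a squarefree positive integer k such that every point of S has the form (r₁, r₂√k) with r₁, r₂ ∈ ℚ. -/
noncomputable def medianLength (p q r : ℝ × ℝ) : ℝ :=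
  Real.sqrt ((p.1 - (q.1 + r.1) / 2) ^ 2 + (p.2 - (q.2 + r.2) / 2) ^ 2)

def IsRationalMedianSet (S : Set (ℝ × ℝ)) : Prop :=
  ¬ Collinear ℝ S ∧
    ∀ p₁ ∈ S, ∀ p₂ ∈ S, ∀ p₃ ∈ S,
      ¬ Collinear ℝ ({p₁, p₂, p₃} : Set (ℝ × ℝ)) →
        (∃ q : ℚ, medianLength p₁ p₂ p₃ = q) ∧
        (∃ q : ℚ, medianLength p₂ p₁ p₃ = q) ∧
        (∃ q : ℚ, medianLength p₃ p₁ p₂ = q)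

lemma cross_of_collinear {p q r : ℝ × ℝ}
    (h : Collinear ℝ ({p, q, r} : Set (ℝ × ℝ))) :
    (q.1 - p.1) * (r.2 - p.2) - (q.2 - p.2) * (r.1 - p.1) = 0 := by
  rw [collinear_iff_of_mem (Set.mem_insert p _)] at h
  obtain ⟨v, hv⟩ := h
  obtain ⟨a, ha⟩ := hv q (by simp)
  obtain ⟨c, hc⟩ := hv r (by simp)
  have h1 : q.1 = a * v.1 + p.1 := by rw [ha]; simp
  have h2 : q.2 = a * v.2 + p.2 := by rw [ha]; simp
  have h3 : r.1 = c * v.1 + p.1 := by rw [hc]; simp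
  have h4 : r.2 = c * v.2 + p.2 := by rw [hc]; simp
  rw [h1, h2, h3, h4]; ring

lemma median_sq {p q r : ℝ × ℝ} {c : ℚ} (h : medianLength p q r = c) :
    (p.1 - (q.1 + r.1) / 2) ^ 2 + (p.2 - (q.2 + r.2) / 2) ^ 2 = (c : ℝ) ^ 2 := by
  rw [← h, medianLength, Real.sq_sqrt (by positivity)]

/-- If `S` is a rational median set containing `(0,0)` and `(1,0)`, then there is a
squarefree positive integer `k` such that every point of `S` is of the form
`(r₁, r₂ √k)` with `r₁, r₂ ∈ ℚ`. -/
theorem rationalMedianSet_coordinates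
    (S : Set (ℝ × ℝ)) (hS : IsRationalMedianSet S)
    (h₀ : ((0 : ℝ), (0 : ℝ)) ∈ S) (h₁ : ((1 : ℝ), (0 : ℝ)) ∈ S) :
    ∃ k : ℕ, 0 < k ∧ Squarefree k ∧
      ∀ p ∈ S, ∃ r₁ r₂ : ℚ, p = ((r₁ : ℝ), (r₂ : ℝ) * Real.sqrt k) := by
  obtain ⟨hnc, hmed⟩ := hS
  -- Step 1: off-axis points have rational x and rational y²
  have step1 : ∀ p ∈ S, p.2 ≠ 0 → (∃ q : ℚ, p.1 = q) ∧ (∃ q : ℚ, p.2 ^ 2 = q) := by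
    intro p hp hy
    have hncol : ¬ Collinear ℝ ({p, ((0:ℝ),(0:ℝ)), ((1:ℝ),(0:ℝ))} : Set (ℝ × ℝ)) := by
      intro h
      have := cross_of_collinear h
      simp only at this
      apply hy; linear_combination this
    obtain ⟨⟨qP, hqP⟩, ⟨qA, hqA⟩, ⟨qB, hqB⟩⟩ :=
      hmed p hp _ h₀ _ h₁ hncol
    have EP := median_sq hqP
    have EA := median_sq hqA
    have EB := median_sq hqB
    simp only at EP EA EB
    have hx : p.1 = ((4*(qA^2 - qB^2) + 3)/6 : ℚ) := by
      push_cast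
      linear_combination (4/6 : ℝ) * EA - (4/6 : ℝ) * EB
    refine ⟨⟨_, hx⟩, ⟨qP^2 - ((4*(qA^2 - qB^2) + 3)/6 - 1/2)^2, ?_⟩⟩
    rw [hx] at EP
    push_cast at EP ⊢
    linear_combination EP
  -- Step 2: there is a point off the axis
  have hQex : ∃ Q ∈ S, Q.2 ≠ 0 := by
    by_contra h
    push_neg at h
    apply hnc
    rw [collinear_iff_of_mem h₀]
    refine ⟨((1:ℝ),(0:ℝ)), fun p hp => ⟨p.1, ?_⟩⟩
    have := h p hp
    ext <;> simp [this]
  obtain ⟨Q, hQS, hQ2⟩ := hQex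
  obtain ⟨⟨qa, ha⟩, ⟨qb2, hb2⟩⟩ := step1 Q hQS hQ2
  -- Step 3: on-axis points have rational x
  have step3 : ∀ p ∈ S, p.2 = 0 → ∃ q : ℚ, p.1 = q := by
    intro p hp hy0
    by_cases hx0 : p.1 = 0
    · exact ⟨0, by simp [hx0]⟩
    by_cases hx1 : p.1 = 1
    · exact ⟨1, by simp [hx1]⟩
    have hn1 : ¬ Collinear ℝ ({p, ((0:ℝ),(0:ℝ)), Q} : Set (ℝ × ℝ)) := by
      intro h
      have := cross_of_collinear h
      simp only [hy0] at this
      have h' : p.1 * Q.2 = 0 := by linear_combination -this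
      rcases mul_eq_zero.mp h' with h' | h'
      · exact absurd h' hx0
      · exact absurd h' hQ2
    have hn2 : ¬ Collinear ℝ ({p, ((1:ℝ),(0:ℝ)), Q} : Set (ℝ × ℝ)) := by
      intro h
      have := cross_of_collinear h
      simp only [hy0] at this
      have hx1' : (1:ℝ) - p.1 ≠ 0 := sub_ne_zero.mpr (fun h => hx1 h.symm)
      have h' : (1 - p.1) * Q.2 = 0 := by linear_combination this
      rcases mul_eq_zero.mp h' with h' | h'
      · exact absurd h' hx1'
      · exact absurd h' hQ2
    obtain ⟨⟨q1, hq1⟩, _, _⟩ := hmed p hp _ h₀ Q hQS hn1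
    obtain ⟨⟨q2, hq2⟩, _, _⟩ := hmed p hp _ h₁ Q hQS hn2
    have E1 := median_sq hq1
    have E2 := median_sq hq2
    simp only at E1 E2
    rw [ha] at E1 E2
    refine ⟨q1^2 - q2^2 + (2*qa + 1)/4, ?_⟩
    push_cast
    linear_combination E1 - E2
  -- Step 4: y·b is rational
  have step4 : ∀ p ∈ S, p.2 ≠ 0 → ∃ q : ℚ, p.2 * Q.2 = q := by
    intro p hp hy
    obtain ⟨⟨qx, hx⟩, ⟨qy2, hy2⟩⟩ := step1 p hp hy
    by_cases hc1 : p.1 * Q.2 - p.2 * Q.1 ≠ 0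
    · have hn : ¬ Collinear ℝ ({p, Q, ((0:ℝ),(0:ℝ))} : Set (ℝ × ℝ)) := by
        intro h
        have := cross_of_collinear h
        apply hc1; linear_combination this
      obtain ⟨_, _, ⟨q, hq⟩⟩ := hmed p hp Q hQS _ h₀ hn
      have E := median_sq hq
      simp only at E
      rw [hx, ha] at E
      refine ⟨(4*q^2 - (qx + qa)^2 - qy2 - qb2)/2, ?_⟩
      push_cast
      linear_combination 2 * E - (1/2 : ℝ) * hy2 - (1/2 : ℝ) * hb2
    · push_neg at hc1
      by_cases hc2 : (p.1 - 1) * Q.2 - p.2 * (Q.1 - 1) ≠ 0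
      · have hn : ¬ Collinear ℝ ({p, Q, ((1:ℝ),(0:ℝ))} : Set (ℝ × ℝ)) := by
          intro h
          have := cross_of_collinear h
          apply hc2; linear_combination this
        obtain ⟨_, _, ⟨q, hq⟩⟩ := hmed p hp Q hQS _ h₁ hn
        have E := median_sq hq
        simp only at E
        rw [hx, ha] at E
        refine ⟨(4*q^2 - (2 - qx - qa)^2 - qy2 - qb2)/2, ?_⟩
        push_cast
        linear_combination 2 * E - (1/2 : ℝ) * hy2 - (1/2 : ℝ) * hb2
      · push_neg at hc2
        have hyb : p.2 = Q.2 := by linear_combination hc2 - hc1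
        exact ⟨qb2, by rw [hyb, ← sq]; exact hb2⟩
  -- squarefree part of qb2
  have hqb2pos : 0 < qb2 := by
    have : (0:ℝ) < (qb2 : ℝ) := hb2 ▸ (by positivity)
    exact_mod_cast this
  set N : ℕ := qb2.num.toNat * qb2.den with hN
  have hNpos : 0 < N := by
    apply Nat.mul_pos
    · simpa using Rat.num_pos.mpr hqb2pos
    · exact qb2.pos
  obtain ⟨k, t, hkt, hsf⟩ := Nat.sq_mul_squarefree N
  have hk0 : k ≠ 0 := by
    rintro rfl
    simp at hkt
    omega
  have hkpos : 0 < k := Nat.pos_of_ne_zero hk0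
  -- b^2 * den^2 = t^2 * k  over ℝ
  have hnumi : ((qb2.num.toNat : ℤ)) = qb2.num :=
    Int.toNat_of_nonneg (le_of_lt (Rat.num_pos.mpr hqb2pos))
  have hnum : ((qb2.num.toNat : ℚ)) = qb2 * qb2.den := by
    rw [Rat.mul_den_eq_num]
    exact_mod_cast hnumi
  have hNQ : ((N : ℚ)) = qb2 * qb2.den ^ 2 := by
    rw [hN]
    push_cast [hnum]
    ring
  have hbden : (Q.2 * (qb2.den : ℝ)) ^ 2 = (t:ℝ)^2 * k := by
    have h1 : (N:ℝ) = (qb2:ℝ) * (qb2.den:ℝ)^2 := by exact_mod_cast hNQ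
    have h2 : ((t:ℝ))^2 * (k:ℝ) = (N:ℝ) := by exact_mod_cast hkt
    rw [mul_pow, hb2]
    linarith
  -- c := b * √k is rational up to sign
  set c : ℝ := Q.2 * Real.sqrt k with hcdef
  have hkR : (0:ℝ) < (k:ℝ) := by exact_mod_cast hkpos
  have hsk : Real.sqrt k > 0 := Real.sqrt_pos.mpr hkR
  have hcne : c ≠ 0 := mul_ne_zero hQ2 (ne_of_gt hsk)
  have hc2 : c ^ 2 = (((t * k : ℚ) / (qb2.den : ℚ) : ℚ) : ℝ) ^ 2 := by
    have hden : ((qb2.den : ℚ) : ℝ) ≠ 0 := by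
      simp [Rat.den_ne_zero]
    rw [hcdef, mul_pow, Real.sq_sqrt (le_of_lt hkR)]
    push_cast
    rw [div_pow]
    rw [eq_div_iff (by positivity)]
    nlinarith [hbden]
  have hcrat : ∃ qc : ℚ, c = (qc : ℝ) := by
    rcases sq_eq_sq_iff_eq_or_eq_neg.mp hc2 with h | h
    · exact ⟨_, h⟩
    · exact ⟨-((t * k : ℚ) / (qb2.den : ℚ)), by rw [h]; push_cast; ring⟩
  obtain ⟨qc, hqc⟩ := hcrat
  have hqcne : (qc : ℝ) ≠ 0 := hqc ▸ hcne
  refine ⟨k, hkpos, hsf, ?_⟩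
  intro p hp
  by_cases hy : p.2 = 0
  · obtain ⟨qx, hx⟩ := step3 p hp hy
    exact ⟨qx, 0, by ext <;> simp [hx, hy]⟩
  · obtain ⟨⟨qx, hx⟩, _⟩ := step1 p hp hy
    obtain ⟨qyb, hyb⟩ := step4 p hp hy
    refine ⟨qx, qyb / qc, ?_⟩
    have h2 : p.2 = (↑(qyb / qc) : ℝ) * Real.sqrt k := by
      push_cast
      rw [div_mul_eq_mul_div, eq_div_iff hqcne, ← hqc, hcdef]
      linear_combination Real.sqrt k * hyb
    ext
    · exact hx
    · exact h2
end

section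
/- Let S ⊆ ℝ² be a rational median set containing (0,0) and (1,0), and let (x, y) ∈ S be a point not on the x-axis. Then x is a rational number and y² is a rational number. -/
/-- If `S` is a rational median set containing `(0,0)` and `(1,0)` and `(x, y) ∈ S`
is off the `x`-axis, then `x` and `y²` are rational numbers. -/
theorem rationalMedianSet_point_coordinates
    (S : Set (ℝ × ℝ)) (hS : IsRationalMedianSet S)
    (h₀ : ((0 : ℝ), (0 : ℝ)) ∈ S) (h₁ : ((1 : ℝ), (0 : ℝ)) ∈ S)
    (x y : ℝ) (hxy : (x, y) ∈ S) (hy : y ≠ 0) :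
    (∃ r : ℚ, x = r) ∧ (∃ r : ℚ, y ^ 2 = r) := by
  have hnc : ¬ Collinear ℝ ({((0:ℝ),(0:ℝ)), ((1:ℝ),(0:ℝ)), (x, y)} : Set (ℝ × ℝ)) := by
    intro hc
    have h0mem : ((0:ℝ),(0:ℝ)) ∈ ({((0:ℝ),(0:ℝ)), ((1:ℝ),(0:ℝ)), (x, y)} : Set (ℝ × ℝ)) := by
      simp
    rw [collinear_iff_of_mem h0mem] at hc
    obtain ⟨v, hv⟩ := hc
    obtain ⟨r1, hr1⟩ := hv ((1:ℝ),(0:ℝ)) (by simp)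
    obtain ⟨r2, hr2⟩ := hv (x, y) (by simp)
    have h1 : r1 * v.1 = 1 := by
      have := congrArg Prod.fst hr1; simpa using this.symm
    have h2 : r1 * v.2 = 0 := by
      have := congrArg Prod.snd hr1; simpa using this.symm
    have hv2 : v.2 = 0 := by
      rcases mul_eq_zero.mp h2 with h | h
      · exfalso; rw [h] at h1; simpa using h1
      · exact h
    have hy0 : y = 0 := by
      have := congrArg Prod.snd hr2
      simpa [hv2] using this
    exact hy hy0
  obtain ⟨⟨q1, hq1⟩, ⟨q2, hq2⟩, ⟨q3, hq3⟩⟩ := hS.2 _ h₀ _ h₁ _ hxy hnc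
  simp only [medianLength] at hq1 hq2 hq3
  have e1 : ((0:ℝ) - (1 + x) / 2) ^ 2 + ((0:ℝ) - (0 + y) / 2) ^ 2 = (q1:ℝ)^2 := by
    rw [← Real.sq_sqrt (by positivity :
      ((0:ℝ) - (1 + x) / 2) ^ 2 + ((0:ℝ) - (0 + y) / 2) ^ 2 ≥ 0), hq1]
  have e2 : ((1:ℝ) - (0 + x) / 2) ^ 2 + ((0:ℝ) - (0 + y) / 2) ^ 2 = (q2:ℝ)^2 := by
    rw [← Real.sq_sqrt (by positivity :
      ((1:ℝ) - (0 + x) / 2) ^ 2 + ((0:ℝ) - (0 + y) / 2) ^ 2 ≥ 0), hq2]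
  have e3 : (x - (0 + 1) / 2) ^ 2 + (y - (0 + 0) / 2) ^ 2 = (q3:ℝ)^2 := by
    rw [← Real.sq_sqrt (by positivity :
      (x - (0 + 1) / 2) ^ 2 + (y - (0 + 0) / 2) ^ 2 ≥ 0), hq3]
  have hx : x = ((4*q1^2 - 4*q2^2 + 3)/6 : ℚ) := by
    push_cast
    nlinarith [e1, e2]
  refine ⟨⟨_, hx⟩, ⟨q3^2 - ((4*q1^2 - 4*q2^2 + 3)/6 - 1/2)^2, ?_⟩⟩
  have hx' : x = ((4*(q1:ℝ)^2 - 4*(q2:ℝ)^2 + 3)/6 : ℝ) := by rw [hx]; push_cast; ring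
  push_cast
  nlinarith [e3, hx']
end

section
/- Let λ be a real number with λ ≠ 0 and λ² < 1. Then the system of equations 2x² + 2y² − 1 = 0 and x² + y² − 2λxy − 1 = 0 has exactly four solutions (x, y) ∈ ℂ²; that is, the set {(x, y) ∈ ℂ × ℂ : 2x² + 2y² = 1 and x² + y² − 2λxy = 1} has exactly 4 elements. -/
/-- For real `λ ≠ 0` with `λ² < 1`, the circle `2x² + 2y² = 1` and the ellipse
`x² + y² − 2λxy = 1` intersect in exactly four points of `ℂ²`. -/
theorem circle_ellipse_four_intersections (l : ℝ) (hl0 : l ≠ 0) (hl1 : l ^ 2 < 1) :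
    {p : ℂ × ℂ | 2 * p.1 ^ 2 + 2 * p.2 ^ 2 = 1 ∧
      p.1 ^ 2 + p.2 ^ 2 - 2 * (l : ℂ) * p.1 * p.2 = 1}.encard = 4 := by
  have hc : (l : ℂ) ≠ 0 := by exact_mod_cast hl0
  have hlt : l < 1 := by nlinarith
  have hgt : -1 < l := by nlinarith
  have hc1 : (l : ℂ) ≠ 1 := by exact_mod_cast hlt.ne
  have hcm1 : (l : ℂ) ≠ -1 := by
    intro h
    exact hgt.ne' (by exact_mod_cast h)
  set c : ℂ := (l : ℂ) with hcdef
  have h2c : (2 : ℂ) * c ≠ 0 := mul_ne_zero two_ne_zero hc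
  obtain ⟨s, hsr⟩ := IsAlgClosed.exists_pow_nat_eq (k := ℂ) ((c - 1) / (2 * c)) (n := 2) (by norm_num)
  obtain ⟨t, htr⟩ := IsAlgClosed.exists_pow_nat_eq (k := ℂ) ((c + 1) / (2 * c)) (n := 2) (by norm_num)
  have hs' : 2 * c * s ^ 2 = c - 1 := by rw [hsr]; field_simp
  have ht' : 2 * c * t ^ 2 = c + 1 := by rw [htr]; field_simp
  have hs0 : s ≠ 0 := by
    intro h; apply hc1; linear_combination -hs' + 2 * c * s * h
  have ht0 : t ≠ 0 := by
    intro h; apply hcm1; linear_combination -ht' + 2 * c * t * h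
  have hst1 : s + t ≠ 0 := by
    intro h
    have : (2 : ℂ) = 0 := by linear_combination hs' - ht' + 2 * c * (t - s) * h
    norm_num at this
  have hst2 : s - t ≠ 0 := by
    intro h
    have : (2 : ℂ) = 0 := by linear_combination hs' - ht' - 2 * c * (t + s) * h
    norm_num at this
  have key : {p : ℂ × ℂ | 2 * p.1 ^ 2 + 2 * p.2 ^ 2 = 1 ∧
      p.1 ^ 2 + p.2 ^ 2 - 2 * c * p.1 * p.2 = 1} =
      {((s+t)/2, (s-t)/2), ((s-t)/2, (s+t)/2), (-(s+t)/2, -(s-t)/2), (-(s-t)/2, -(s+t)/2)} := by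
    ext ⟨x, y⟩
    simp only [Set.mem_setOf_eq, Set.mem_insert_iff, Set.mem_singleton_iff, Prod.mk.injEq]
    constructor
    · rintro ⟨h1, h2⟩
      have hprod : 4 * c * x * y = -1 := by linear_combination h1 - 2 * h2
      have e1 : (x + y - s) * (x + y + s) = 0 := by
        have e1sq : (x + y) ^ 2 = s ^ 2 :=
          mul_left_cancel₀ h2c (by linear_combination c * h1 + hprod - hs')
        linear_combination e1sq
      have e2 : (x - y - t) * (x - y + t) = 0 := by
        have e2sq : (x - y) ^ 2 = t ^ 2 :=
          mul_left_cancel₀ h2c (by linear_combination c * h1 - hprod - ht')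
        linear_combination e2sq
      rcases mul_eq_zero.mp e1 with h1' | h1' <;> rcases mul_eq_zero.mp e2 with h2' | h2'
      · exact Or.inl ⟨by linear_combination (h1' + h2') / 2, by linear_combination (h1' - h2') / 2⟩
      · exact Or.inr (Or.inl ⟨by linear_combination (h1' + h2') / 2, by linear_combination (h1' - h2') / 2⟩)
      · exact Or.inr (Or.inr (Or.inr ⟨by linear_combination (h1' + h2') / 2, by linear_combination (h1' - h2') / 2⟩))
      · exact Or.inr (Or.inr (Or.inl ⟨by linear_combination (h1' + h2') / 2, by linear_combination (h1' - h2') / 2⟩))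
    · rintro (⟨rfl, rfl⟩ | ⟨rfl, rfl⟩ | ⟨rfl, rfl⟩ | ⟨rfl, rfl⟩) <;>
        exact ⟨mul_left_cancel₀ h2c (by linear_combination hs' + ht'),
          mul_left_cancel₀ h2c (by linear_combination ((1-c)/2) * hs' + ((1+c)/2) * ht')⟩
  rw [key, Set.encard_insert_of_notMem, Set.encard_insert_of_notMem, Set.encard_pair]
  · rfl
  · intro h
    have h1 := (Prod.ext_iff.mp h).1
    exact ht0 (by linear_combination -h1)
  · simp only [Set.mem_insert_iff, Set.mem_singleton_iff, Prod.mk.injEq, not_or]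
    exact ⟨fun h => hs0 (by linear_combination h.1), fun h => hst2 (by linear_combination h.1)⟩
  · simp only [Set.mem_insert_iff, Set.mem_singleton_iff, Prod.mk.injEq, not_or]
    exact ⟨fun h => ht0 (by linear_combination h.1), fun h => hst1 (by linear_combination h.1),
      fun h => hs0 (by linear_combination h.1)⟩
end

section
/- Let λ be a real number with λ ≠ 0 and λ² < 1. The space curve X₁ ⊂ ℂ³ defined by the two equations G(x, y) = 1 − x² − y² + 2λxy = 0 and 4t² − 2x² − 2y² + 1 = 0 is smooth: at every point (x, y, t) ∈ ℂ³ satisfying both equations, the gradient vectors (−2x + 2λy, −2y + 2λx, 0) and (−4x, −4y, 8t) are linearly independent over ℂ. -/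
/-- For real `λ ≠ 0` with `λ² < 1`, the space curve `X₁ ⊂ ℂ³` cut out by
`1 − x² − y² + 2λxy = 0` and `4t² − 2x² − 2y² + 1 = 0` is smooth: at each of its
points the two gradient vectors `(−2x + 2λy, −2y + 2λx, 0)` and `(−4x, −4y, 8t)`
are linearly independent over `ℂ`. -/
theorem curve_X1_smooth (l : ℝ) (hl0 : l ≠ 0) (hl1 : l ^ 2 < 1) :
    ∀ x y t : ℂ,
      1 - x ^ 2 - y ^ 2 + 2 * (l : ℂ) * x * y = 0 →
      4 * t ^ 2 - 2 * x ^ 2 - 2 * y ^ 2 + 1 = 0 →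
      LinearIndependent ℂ
        ![(![-2 * x + 2 * (l : ℂ) * y, -2 * y + 2 * (l : ℂ) * x, 0] : Fin 3 → ℂ),
          (![-4 * x, -4 * y, 8 * t] : Fin 3 → ℂ)] := by
  intro x y t h1 h2
  have hl : (l : ℂ) ≠ 0 := by exact_mod_cast hl0
  have hl1' : ((l : ℂ)) ^ 2 ≠ 1 := by
    intro h
    have : (l : ℝ) ^ 2 = 1 := by exact_mod_cast h
    linarith
  rw [LinearIndependent.pair_iff]
  intro a b hab
  have e0 := congrFun hab 0
  have e1 := congrFun hab 1
  have e2 := congrFun hab 2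
  simp only [Pi.add_apply, Pi.smul_apply, Matrix.cons_val_zero, Matrix.cons_val_one,
    Matrix.head_cons, Matrix.cons_val_two, Matrix.tail_cons, smul_eq_mul, Pi.zero_apply] at e0 e1 e2
  by_cases ht : t = 0
  · -- t = 0 case: show x^2 ≠ y^2, then solve the 2x2 system
    have hd : x ^ 2 - y ^ 2 ≠ 0 := by
      intro hd
      apply hl1'
      have hx2 : x ^ 2 = 1 / 4 := by
        subst ht; linear_combination (-(1:ℂ)/4) * h2 + ((1:ℂ)/2) * hd
      have hy2 : y ^ 2 = 1 / 4 := by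
        subst ht; linear_combination (-(1:ℂ)/4) * h2 - ((1:ℂ)/2) * hd
      have hxy : (l : ℂ) * (x * y) = -1 / 4 := by
        linear_combination ((1:ℂ)/2) * h1 + ((1:ℂ)/2) * hx2 + ((1:ℂ)/2) * hy2
      have : (l : ℂ) ^ 2 * (x ^ 2 * y ^ 2) = 1 / 16 := by
        linear_combination ((l : ℂ) * (x * y) + (-1)/4) * hxy
      rw [hx2, hy2] at this
      linear_combination 16 * this
    have ha : a = 0 := by
      have key : a * (2 * (l : ℂ) * (y ^ 2 - x ^ 2)) = 0 := by
        linear_combination y * e0 - x * e1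
      rcases mul_eq_zero.mp key with h | h
      · exact h
      · exfalso
        rcases mul_eq_zero.mp h with h' | h'
        · exact hl (by simpa using (mul_eq_zero.mp h').resolve_left two_ne_zero)
        · exact hd (by linear_combination -h')
    subst ha
    -- now b * (-4x) = 0 and b * (-4y) = 0; x,y not both zero
    have hb4x : b * (-4 * x) = 0 := by linear_combination e0
    have hb4y : b * (-4 * y) = 0 := by linear_combination e1
    refine ⟨rfl, ?_⟩
    by_contra hb
    have hx : x = 0 := by
      have := mul_eq_zero.mp hb4x
      rcases this with h | h
      · exact absurd h hb
      · have := mul_eq_zero.mp h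
        rcases this with h' | h'
        · norm_num at h'
        · exact h'
    have hy : y = 0 := by
      have := mul_eq_zero.mp hb4y
      rcases this with h | h
      · exact absurd h hb
      · have := mul_eq_zero.mp h
        rcases this with h' | h'
        · norm_num at h'
        · exact h'
    subst hx; subst hy
    norm_num at h1
  · -- t ≠ 0 case: e2 gives b = 0
    have hb : b = 0 := by
      have h8 : b * (8 * t) = 0 := by linear_combination e2
      rcases mul_eq_zero.mp h8 with h | h
      · exact h
      · exact absurd h (by simp [ht])
    subst hb
    refine ⟨?_, rfl⟩
    by_contra ha
    have e0' : -2 * x + 2 * (l : ℂ) * y = 0 := by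
      rcases mul_eq_zero.mp (show a * (-2 * x + 2 * (l : ℂ) * y) = 0 by
        linear_combination e0) with h | h
      · exact absurd h ha
      · exact h
    have e1' : -2 * y + 2 * (l : ℂ) * x = 0 := by
      rcases mul_eq_zero.mp (show a * (-2 * y + 2 * (l : ℂ) * x) = 0 by
        linear_combination e1) with h | h
      · exact absurd h ha
      · exact h
    have hx : x * (1 - (l : ℂ) ^ 2) = 0 := by
      linear_combination (-(1:ℂ)/2) * e0' - ((l : ℂ)/2) * e1'
    have hx0 : x = 0 := by
      rcases mul_eq_zero.mp hx with h | h
      · exact h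
      · exact absurd (by linear_combination -h) hl1'
    have hy0 : y = 0 := by
      have : (l : ℂ) * y = x := by linear_combination ((1:ℂ)/2) * e0'
      rw [hx0] at this
      rcases mul_eq_zero.mp this with h | h
      · exact absurd h hl
      · exact h
    subst hx0; subst hy0
    norm_num at h1
end

section
/- Let λ be a rational number with λ ≠ 0 and λ² < 1. The affine curve X₁ ⊂ ℂ³ defined by the two equations 1 − x² − y² + 2λxy = 0 and 4t² − 2x² − 2y² + 1 = 0 is irreducible; equivalently, the zero locus of the ideal generated by the polynomials 1 − x² − y² + 2λxy and 4t² − 2x² − 2y² + 1 in the prime spectrum of ℂ[x, y, t] is an irreducible closed set. -/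
set_option maxHeartbeats 1000000
set_option synthInstance.maxHeartbeats 400000

noncomputable section CurveX1Aux

namespace CurveX1

open Polynomial

/-- The base field `ℂ(t)`. -/
abbrev K0 : Type := FractionRing (Polynomial ℂ)

instance : CharZero K0 :=
  charZero_of_injective_algebraMap (IsFractionRing.injective (Polynomial ℂ) K0)

/-- The quadratic polynomial `a2 * t² + a0`. -/
def quad (a2 a0 : ℂ) : Polynomial ℂ := C a2 * X ^ 2 + C a0

lemma quad_natDegree {a2 : ℂ} (h : a2 ≠ 0) (a0 : ℂ) : (quad a2 a0).natDegree = 2 := by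
  have h1 : quad a2 a0 = C a2 * X ^ 2 + C 0 * X + C a0 := by simp [quad]
  rw [h1, natDegree_quadratic h]

lemma quad_ne_zero {a2 : ℂ} (h : a2 ≠ 0) (a0 : ℂ) : quad a2 a0 ≠ 0 := by
  intro hq
  have h2 := quad_natDegree h a0
  rw [hq] at h2
  simp at h2

lemma quad_separable {a2 a0 : ℂ} (h2 : a2 ≠ 0) (h0 : a0 ≠ 0) :
    (quad a2 a0).Separable := by
  have hc : (C (-(a0 / a2)) * C a2 + C a0 : Polynomial ℂ) = 0 := by
    rw [← C_mul, ← C_add, show -(a0 / a2) * a2 + a0 = 0 by field_simp; ring]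
    exact C_0
  have hq : quad a2 a0 = (X ^ 2 - C (-(a0 / a2))) * C a2 := by
    unfold quad; linear_combination hc
  rw [hq]
  refine Separable.mul_unit ?_ (isUnit_C.mpr h2.isUnit)
  refine separable_X_pow_sub_C _ (by norm_num) ?_
  simpa using div_ne_zero h0 h2

lemma quad_coprime {a2 a0 b2 b0 : ℂ} (he : a2 * b0 - a0 * b2 ≠ 0) :
    IsCoprime (quad a2 a0) (quad b2 b0) := by
  refine ⟨C (-b2 / (a2 * b0 - a0 * b2)), C (a2 / (a2 * b0 - a0 * b2)), ?_⟩
  have h1 : (C (-b2 / (a2 * b0 - a0 * b2)) * C a2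
      + C (a2 / (a2 * b0 - a0 * b2)) * C b2 : Polynomial ℂ) = 0 := by
    rw [← C_mul, ← C_mul, ← C_add,
      show -b2 / (a2 * b0 - a0 * b2) * a2 + a2 / (a2 * b0 - a0 * b2) * b2 = 0 by
        field_simp; ring]
    exact C_0
  have h2 : (C (-b2 / (a2 * b0 - a0 * b2)) * C a0
      + C (a2 / (a2 * b0 - a0 * b2)) * C b0 : Polynomial ℂ) = 1 := by
    rw [← C_mul, ← C_mul, ← C_add,
      show -b2 / (a2 * b0 - a0 * b2) * a0 + a2 / (a2 * b0 - a0 * b2) * b0 = 1 by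
        rw [div_mul_eq_mul_div, div_mul_eq_mul_div, ← add_div, div_eq_one_iff_eq he]; ring]
    exact C_1
  unfold quad
  linear_combination (X : Polynomial ℂ) ^ 2 * h1 + h2

lemma not_square_of_squarefree {s : Polynomial ℂ} (hsf : Squarefree s)
    (hdeg : s.natDegree ≠ 0) : ∀ r : Polynomial ℂ, r * r ≠ s := by
  intro r h
  have hu : IsUnit r := hsf r (h ▸ dvd_rfl)
  apply hdeg
  rw [← h]
  rcases Polynomial.isUnit_iff.mp hu with ⟨c, _, hcr⟩
  rw [← hcr, ← C_mul, natDegree_C]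

lemma not_square_frac {s : Polynomial ℂ}
    (h : ∀ r : Polynomial ℂ, r * r ≠ s) :
    ∀ z : K0, z * z ≠ algebraMap (Polynomial ℂ) K0 s := by
  intro z hz
  have hint : IsIntegral (Polynomial ℂ) z := by
    refine ⟨X ^ 2 - C s, monic_X_pow_sub_C s (by norm_num), ?_⟩
    simp only [eval₂_sub, eval₂_X_pow, eval₂_C]
    rw [pow_two, hz, sub_self]
  obtain ⟨r, hr⟩ := IsIntegrallyClosed.isIntegral_iff.mp hint
  apply h r
  apply IsFractionRing.injective (Polynomial ℂ) K0
  rw [map_mul, hr, hz]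

section TwoAdjoinRing

variable {F : Type} [CommRing F]

lemma root_sq (w : F) :
    (AdjoinRoot.root (X ^ 2 - C w)) ^ 2 = AdjoinRoot.of (X ^ 2 - C w) w := by
  have h := AdjoinRoot.mk_self (f := X ^ 2 - C w)
  rw [map_sub, map_pow, AdjoinRoot.mk_X, sub_eq_zero] at h
  exact h

variable [Nontrivial F]

lemma repr_adjoinRoot (w : F) (z : AdjoinRoot (X ^ 2 - C w)) :
    ∃ c0 c1 : F, z = AdjoinRoot.of (X ^ 2 - C w) c0
      + AdjoinRoot.of (X ^ 2 - C w) c1 * AdjoinRoot.root (X ^ 2 - C w) := by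
  obtain ⟨p, rfl⟩ := AdjoinRoot.mk_surjective z
  have hm : (X ^ 2 - C w).Monic := monic_X_pow_sub_C w (by norm_num)
  have hq1 : (X ^ 2 - C w : Polynomial F) ≠ 1 := by
    intro h
    have h2 : (X ^ 2 - C w : Polynomial F).natDegree = 2 := natDegree_X_pow_sub_C
    rw [h] at h2
    simp at h2
  have hdeg : (p %ₘ (X ^ 2 - C w)).natDegree ≤ 1 := by
    have h2 := natDegree_modByMonic_lt p hm hq1
    rw [natDegree_X_pow_sub_C] at h2
    omega
  refine ⟨(p %ₘ (X ^ 2 - C w)).coeff 0, (p %ₘ (X ^ 2 - C w)).coeff 1, ?_⟩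
  conv_lhs => rw [← modByMonic_add_div p (X ^ 2 - C w)]
  rw [map_add, map_mul, AdjoinRoot.mk_self, zero_mul, add_zero]
  conv_lhs => rw [eq_X_add_C_of_natDegree_le_one hdeg]
  rw [map_add, map_mul, AdjoinRoot.mk_X]
  exact add_comm _ _

lemma indep_adjoinRoot (w : F) {c0 c1 : F}
    (h : AdjoinRoot.of (X ^ 2 - C w) c0
      + AdjoinRoot.of (X ^ 2 - C w) c1 * AdjoinRoot.root (X ^ 2 - C w) = 0) :
    c0 = 0 ∧ c1 = 0 := by
  have hmk : AdjoinRoot.mk (X ^ 2 - C w) (C c0 + C c1 * X) = 0 := by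
    rw [map_add, map_mul, AdjoinRoot.mk_X]
    exact h
  rw [AdjoinRoot.mk_eq_zero] at hmk
  have hz : (C c0 + C c1 * X : Polynomial F) = 0 := by
    by_contra h0
    refine (monic_X_pow_sub_C w (two_ne_zero)).not_dvd_of_natDegree_lt h0 ?_ hmk
    rw [natDegree_X_pow_sub_C]
    have h1 : (C c0 + C c1 * X : Polynomial F).natDegree ≤ 1 := by
      refine le_trans (natDegree_add_le _ _) ?_
      simp only [natDegree_C]
      refine max_le (by norm_num) ?_
      refine le_trans (natDegree_mul_le) ?_
      simp
    omega
  constructor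
  · have h0 := congrArg (fun q : Polynomial F => q.coeff 0) hz
    simpa using h0
  · have h1 := congrArg (fun q : Polynomial F => q.coeff 1) hz
    simpa using h1

end TwoAdjoinRing

section TwoAdjoinField

variable {F : Type} [Field F]

lemma irr_quad (w : F) (h : ∀ z : F, z * z ≠ w) :
    Irreducible (X ^ 2 - C w : Polynomial F) :=
  X_pow_sub_C_irreducible_of_prime Nat.prime_two (fun b hb => h b (by rw [← hb]; ring))

end TwoAdjoinField

end CurveX1

noncomputable section CurveX1Tower

namespace CurveX1

open Polynomial

section Tower

variable (pa pb : Polynomial ℂ)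

/-- image of `pa` in `K0 = ℂ(t)` -/
def wA : K0 := algebraMap (Polynomial ℂ) K0 pa

/-- first quadratic extension -/
abbrev R1 : Type := AdjoinRoot (X ^ 2 - C (wA pa) : Polynomial K0)

variable [Fact (Irreducible (X ^ 2 - C (wA pa) : Polynomial K0))]

/-- the second quadratic polynomial, over `R1` -/
abbrev qB : Polynomial (R1 pa) := X ^ 2 - C (AdjoinRoot.of (X ^ 2 - C (wA pa)) (wA pb))

variable [Fact (Irreducible (qB pa pb))]

/-- second quadratic extension -/
abbrev R2 : Type := AdjoinRoot (qB pa pb)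

def i1 : K0 →+* R1 pa := AdjoinRoot.of (X ^ 2 - C (wA pa))

def i2 : R1 pa →+* R2 pa pb := AdjoinRoot.of (qB pa pb)

def rho : Polynomial ℂ →+* R2 pa pb :=
  (i2 pa pb).comp ((i1 pa).comp (algebraMap (Polynomial ℂ) K0))

def kap : ℂ →+* R2 pa pb := (rho pa pb).comp (Polynomial.C : ℂ →+* Polynomial ℂ)

def tauP : R2 pa pb := rho pa pb Polynomial.X

def UU : R2 pa pb := i2 pa pb (AdjoinRoot.root (X ^ 2 - C (wA pa)))

def VV : R2 pa pb := AdjoinRoot.root (qB pa pb)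

lemma UU_sq : UU pa pb ^ 2 = rho pa pb pa := by
  rw [UU, ← map_pow, root_sq]
  rfl

lemma VV_sq : VV pa pb ^ 2 = rho pa pb pb :=
  root_sq (AdjoinRoot.of (X ^ 2 - C (wA pa)) (wA pb))

lemma rho_quad (a2 a0 : ℂ) :
    rho pa pb (quad a2 a0) = kap pa pb a2 * tauP pa pb ^ 2 + kap pa pb a0 := by
  rw [quad, map_add, map_mul, map_pow]
  rfl

/-- evaluation of `MvPolynomial (Fin 3) ℂ` sending `x, y, t` to
`(u+v)/2, (u-v)/2, t` in the second extension. -/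
def Phi : MvPolynomial (Fin 3) ℂ →+* R2 pa pb :=
  MvPolynomial.eval₂Hom (kap pa pb)
    ![kap pa pb 2⁻¹ * (UU pa pb + VV pa pb),
      kap pa pb 2⁻¹ * (UU pa pb - VV pa pb),
      tauP pa pb]

lemma Phi_X0 : Phi pa pb (MvPolynomial.X 0) = kap pa pb 2⁻¹ * (UU pa pb + VV pa pb) := by
  simp [Phi]

lemma Phi_X1 : Phi pa pb (MvPolynomial.X 1) = kap pa pb 2⁻¹ * (UU pa pb - VV pa pb) := by
  simp [Phi]

lemma Phi_X2 : Phi pa pb (MvPolynomial.X 2) = tauP pa pb := by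
  simp [Phi]

lemma Phi_C (r : ℂ) : Phi pa pb (MvPolynomial.C r) = kap pa pb r := by
  simp [Phi]

/-- the substitution `t ↦ X 2`. -/
def TT : Polynomial ℂ →+* MvPolynomial (Fin 3) ℂ :=
  eval₂RingHom (MvPolynomial.C : ℂ →+* MvPolynomial (Fin 3) ℂ) (MvPolynomial.X 2)

lemma Phi_TT (γ : Polynomial ℂ) : Phi pa pb (TT γ) = rho pa pb γ := by
  have h : (Phi pa pb).comp TT = rho pa pb := by
    apply Polynomial.ringHom_ext
    · intro r
      simp only [RingHom.comp_apply, TT, coe_eval₂RingHom, eval₂_C]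
      exact Phi_C pa pb r
    · simp only [RingHom.comp_apply, TT, coe_eval₂RingHom, eval₂_X]
      exact Phi_X2 pa pb
  exact RingHom.congr_fun h γ

lemma TT_quad (a2 a0 : ℂ) :
    TT (quad a2 a0) = MvPolynomial.C a2 * (MvPolynomial.X 2) ^ 2 + MvPolynomial.C a0 := by
  simp [TT, quad]

end Tower

end CurveX1

noncomputable section CurveX1Part3

namespace CurveX1

open Polynomial

lemma irr1 (pa : Polynomial ℂ) (hna : ∀ z : K0, z * z ≠ wA pa) :
    Irreducible (X ^ 2 - C (wA pa) : Polynomial K0) :=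
  irr_quad (wA pa) hna

lemma not_square_R1 (pa pb : Polynomial ℂ)
    [Fact (Irreducible (X ^ 2 - C (wA pa) : Polynomial K0))]
    (hnb : ∀ z : K0, z * z ≠ wA pb)
    (hnab : ∀ z : K0, z * z ≠ wA pa * wA pb) :
    ∀ z : R1 pa, z * z ≠ AdjoinRoot.of (X ^ 2 - C (wA pa)) (wA pb) := by
  intro z hz
  obtain ⟨c0, c1, rfl⟩ := repr_adjoinRoot (wA pa) z
  have hr := root_sq (wA pa)
  have hexp : AdjoinRoot.of (X ^ 2 - C (wA pa)) (c0 * c0 + c1 * c1 * wA pa - wA pb)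
      + AdjoinRoot.of (X ^ 2 - C (wA pa)) (2 * c0 * c1)
        * AdjoinRoot.root (X ^ 2 - C (wA pa)) = 0 := by
    simp only [map_add, map_mul, map_sub, map_ofNat]
    linear_combination hz - (AdjoinRoot.of (X ^ 2 - C (wA pa)) c1) ^ 2 * hr
  obtain ⟨e1, e2⟩ := indep_adjoinRoot (wA pa) hexp
  have hc01 : c0 * c1 = 0 := by
    rw [mul_assoc] at e2
    rcases mul_eq_zero.mp e2 with h | h
    · exact absurd h two_ne_zero
    · exact h
  rcases mul_eq_zero.mp hc01 with h | h
  · exact hnab (c1 * wA pa)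
      (by linear_combination (wA pa) * e1 - (wA pa * c0) * h)
  · exact hnb c0 (by linear_combination e1 - (c1 * wA pa) * h)

lemma irr2 (pa pb : Polynomial ℂ)
    [Fact (Irreducible (X ^ 2 - C (wA pa) : Polynomial K0))]
    (hnb : ∀ z : K0, z * z ≠ wA pb)
    (hnab : ∀ z : K0, z * z ≠ wA pa * wA pb) :
    Irreducible (qB pa pb) :=
  irr_quad _ (not_square_R1 pa pb hnb hnab)

lemma wA_mul (p q : Polynomial ℂ) : wA (p * q) = wA p * wA q :=
  map_mul (algebraMap (Polynomial ℂ) K0) p q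

lemma rho_apply (pa pb γ : Polynomial ℂ)
    [Fact (Irreducible (X ^ 2 - C (wA pa) : Polynomial K0))]
    [Fact (Irreducible (qB pa pb))] :
    rho pa pb γ = i2 pa pb (i1 pa (wA γ)) := rfl

end CurveX1

noncomputable section CurveX1Main

namespace CurveX1

open Polynomial

theorem span_fg_prime (μ a2 a0 b2 b0 : ℂ) (hμ : μ ≠ 0)
    (ha2 : a2 ≠ 0) (ha0 : a0 ≠ 0) (hb2 : b2 ≠ 0) (hb0 : b0 ≠ 0)
    (he : a2 * b0 - a0 * b2 ≠ 0)
    (hs2 : a2 + b2 = 4) (hs0 : a0 + b0 = 1)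
    (hd2 : μ * (a2 - b2) = 4) (hd0 : μ * (a0 - b0) = -1) :
    (Ideal.span ({1 - MvPolynomial.X 0 ^ 2 - MvPolynomial.X 1 ^ 2 + 2 * MvPolynomial.C μ * MvPolynomial.X 0 * MvPolynomial.X 1,
      4 * MvPolynomial.X 2 ^ 2 - 2 * MvPolynomial.X 0 ^ 2 - 2 * MvPolynomial.X 1 ^ 2 + 1} :
      Set (MvPolynomial (Fin 3) ℂ))).IsPrime := by
  set f : MvPolynomial (Fin 3) ℂ :=
    1 - MvPolynomial.X 0 ^ 2 - MvPolynomial.X 1 ^ 2 + 2 * MvPolynomial.C μ * MvPolynomial.X 0 * MvPolynomial.X 1 with hfdef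
  set g : MvPolynomial (Fin 3) ℂ :=
    4 * MvPolynomial.X 2 ^ 2 - 2 * MvPolynomial.X 0 ^ 2 - 2 * MvPolynomial.X 1 ^ 2 + 1 with hgdef
  set J : Ideal (MvPolynomial (Fin 3) ℂ) := Ideal.span {f, g} with hJdef
  have hsepa := quad_separable ha2 ha0
  have hsepb := quad_separable hb2 hb0
  have hKa : ∀ z : K0, z * z ≠ wA (quad a2 a0) :=
    not_square_frac (not_square_of_squarefree hsepa.squarefree
      (by rw [quad_natDegree ha2]; norm_num))
  have hKb : ∀ z : K0, z * z ≠ wA (quad b2 b0) :=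
    not_square_frac (not_square_of_squarefree hsepb.squarefree
      (by rw [quad_natDegree hb2]; norm_num))
  have hKab : ∀ z : K0, z * z ≠ wA (quad a2 a0) * wA (quad b2 b0) := by
    have h1 : Squarefree ((quad a2 a0) * (quad b2 b0)) :=
      (hsepa.mul hsepb (quad_coprime he)).squarefree
    have h2 : ((quad a2 a0) * (quad b2 b0)).natDegree ≠ 0 := by
      rw [natDegree_mul (quad_ne_zero ha2 a0) (quad_ne_zero hb2 b0),
        quad_natDegree ha2, quad_natDegree hb2]
      norm_num
    intro z hz
    exact not_square_frac (not_square_of_squarefree h1 h2) z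
      (show z * z = wA ((quad a2 a0) * (quad b2 b0)) by rw [wA_mul]; exact hz)
  haveI fact1 : Fact (Irreducible (X ^ 2 - C (wA (quad a2 a0)) : Polynomial K0)) :=
    ⟨irr1 _ hKa⟩
  haveI fact2 : Fact (Irreducible (qB (quad a2 a0) (quad b2 b0))) :=
    ⟨irr2 _ _ hKb hKab⟩
  -- basic relations in R2
  have hUq : UU (quad a2 a0) (quad b2 b0) ^ 2 = kap (quad a2 a0) (quad b2 b0) a2 * tauP (quad a2 a0) (quad b2 b0) ^ 2 + kap (quad a2 a0) (quad b2 b0) a0 := by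
    rw [UU_sq, rho_quad]
  have hVq : VV (quad a2 a0) (quad b2 b0) ^ 2 = kap (quad a2 a0) (quad b2 b0) b2 * tauP (quad a2 a0) (quad b2 b0) ^ 2 + kap (quad a2 a0) (quad b2 b0) b0 := by
    rw [VV_sq, rho_quad]
  have h2k : kap (quad a2 a0) (quad b2 b0) 2⁻¹ * 2 = 1 := by
    have h := map_ofNat (kap (quad a2 a0) (quad b2 b0)) 2
    rw [show ((2 : ℂ)) = ((OfNat.ofNat 2 : ℂ)) from rfl] at *
    have : kap (quad a2 a0) (quad b2 b0) 2⁻¹ * kap (quad a2 a0) (quad b2 b0) 2 = kap (quad a2 a0) (quad b2 b0) 1 := by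
      rw [← map_mul]; norm_num
    rw [map_one] at this
    rw [← h]
    exact this
  have hs2k : kap (quad a2 a0) (quad b2 b0) a2 + kap (quad a2 a0) (quad b2 b0) b2 = 4 := by
    have : kap (quad a2 a0) (quad b2 b0) (a2 + b2) = kap (quad a2 a0) (quad b2 b0) 4 := by rw [hs2]
    rw [map_add, map_ofNat] at this
    exact this
  have hs0k : kap (quad a2 a0) (quad b2 b0) a0 + kap (quad a2 a0) (quad b2 b0) b0 = 1 := by
    have : kap (quad a2 a0) (quad b2 b0) (a0 + b0) = kap (quad a2 a0) (quad b2 b0) 1 := by rw [hs0]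
    rw [map_add, map_one] at this
    exact this
  have hd2k : kap (quad a2 a0) (quad b2 b0) μ * (kap (quad a2 a0) (quad b2 b0) a2 - kap (quad a2 a0) (quad b2 b0) b2) = 4 := by
    have : kap (quad a2 a0) (quad b2 b0) (μ * (a2 - b2)) = kap (quad a2 a0) (quad b2 b0) 4 := by rw [hd2]
    rw [map_mul, map_sub, map_ofNat] at this
    exact this
  have hd0k : kap (quad a2 a0) (quad b2 b0) μ * (kap (quad a2 a0) (quad b2 b0) a0 - kap (quad a2 a0) (quad b2 b0) b0) = -1 := by
    have : kap (quad a2 a0) (quad b2 b0) (μ * (a0 - b0)) = kap (quad a2 a0) (quad b2 b0) (-1) := by rw [hd0]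
    rw [map_mul, map_sub, map_neg, map_one] at this
    exact this
  have hUV : UU (quad a2 a0) (quad b2 b0) ^ 2 + VV (quad a2 a0) (quad b2 b0) ^ 2 = 4 * tauP (quad a2 a0) (quad b2 b0) ^ 2 + 1 := by
    rw [hUq, hVq]; linear_combination tauP (quad a2 a0) (quad b2 b0) ^ 2 * hs2k + hs0k
  have hUVd : kap (quad a2 a0) (quad b2 b0) μ * (UU (quad a2 a0) (quad b2 b0) ^ 2 - VV (quad a2 a0) (quad b2 b0) ^ 2) = 4 * tauP (quad a2 a0) (quad b2 b0) ^ 2 - 1 := by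
    rw [hUq, hVq]; linear_combination tauP (quad a2 a0) (quad b2 b0) ^ 2 * hd2k + hd0k
  have hPf : Phi (quad a2 a0) (quad b2 b0) f = 0 := by
    rw [hfdef]
    simp only [map_add, map_sub, map_mul, map_pow, map_one, map_ofNat,
      Phi_C, Phi_X0, Phi_X1, Phi_X2]
    linear_combination (-2 * kap (quad a2 a0) (quad b2 b0) 2⁻¹ * kap (quad a2 a0) (quad b2 b0) 2⁻¹) * hUV
      + (2 * kap (quad a2 a0) (quad b2 b0) 2⁻¹ * kap (quad a2 a0) (quad b2 b0) 2⁻¹) * hUVd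
      + (-(1 + 2 * kap (quad a2 a0) (quad b2 b0) 2⁻¹)) * h2k
  have hPg : Phi (quad a2 a0) (quad b2 b0) g = 0 := by
    rw [hgdef]
    simp only [map_add, map_sub, map_mul, map_pow, map_one, map_ofNat,
      Phi_C, Phi_X0, Phi_X1, Phi_X2]
    linear_combination (-4 * kap (quad a2 a0) (quad b2 b0) 2⁻¹ * kap (quad a2 a0) (quad b2 b0) 2⁻¹) * hUV
      + (-(4 * tauP (quad a2 a0) (quad b2 b0) ^ 2 + 1) * (2 * kap (quad a2 a0) (quad b2 b0) 2⁻¹ + 1)) * h2k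
  have hJker : J ≤ RingHom.ker (Phi (quad a2 a0) (quad b2 b0)) := by
    rw [hJdef, Ideal.span_le]
    intro z hz
    simp only [Set.mem_insert_iff, Set.mem_singleton_iff] at hz
    rcases hz with rfl | rfl
    · exact RingHom.mem_ker.mpr hPf
    · exact RingHom.mem_ker.mpr hPg
  -- constants in MvPolynomial
  have hM2 : (MvPolynomial.C (2⁻¹ : ℂ) : MvPolynomial (Fin 3) ℂ) * 2 = 1 := by
    have h := map_ofNat (MvPolynomial.C : ℂ →+* MvPolynomial (Fin 3) ℂ) 2
    rw [← h, ← map_mul]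
    norm_num
  have hMμ : (MvPolynomial.C (2⁻¹ * μ⁻¹) : MvPolynomial (Fin 3) ℂ) * MvPolynomial.C μ * 2 = 1 := by
    have h := map_ofNat (MvPolynomial.C : ℂ →+* MvPolynomial (Fin 3) ℂ) 2
    rw [← h, ← map_mul, ← map_mul, show 2⁻¹ * μ⁻¹ * μ * 2 = (1 : ℂ) by field_simp]
    exact map_one _
  have hMd : (MvPolynomial.C (4⁻¹ * μ⁻¹ : ℂ) : MvPolynomial (Fin 3) ℂ) * 2 = MvPolynomial.C (2⁻¹ * μ⁻¹) := by
    have h := map_ofNat (MvPolynomial.C : ℂ →+* MvPolynomial (Fin 3) ℂ) 2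
    rw [← h, ← map_mul, show 4⁻¹ * μ⁻¹ * 2 = (2⁻¹ * μ⁻¹ : ℂ) by ring]
  have hMb : (MvPolynomial.C (4⁻¹ * μ⁻¹ : ℂ) : MvPolynomial (Fin 3) ℂ) * 4 = MvPolynomial.C μ⁻¹ := by
    have h := map_ofNat (MvPolynomial.C : ℂ →+* MvPolynomial (Fin 3) ℂ) 4
    rw [← h, ← map_mul, show 4⁻¹ * μ⁻¹ * 4 = (μ⁻¹ : ℂ) by ring]
  -- memberships
  have m1 : MvPolynomial.X 0 ^ 2 + MvPolynomial.X 1 ^ 2 - TT (quad 2 2⁻¹) ∈ J := by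
    rw [hJdef]
    refine Ideal.mem_span_pair.mpr ⟨0, -MvPolynomial.C (2⁻¹ : ℂ), ?_⟩
    rw [hfdef, hgdef, TT_quad,
      show (MvPolynomial.C (2 : ℂ) : MvPolynomial (Fin 3) ℂ) = 2 from map_ofNat _ 2]
    linear_combination (MvPolynomial.X 0 ^ 2 + MvPolynomial.X 1 ^ 2 - 2 * MvPolynomial.X 2 ^ 2) * hM2
  have m2 : MvPolynomial.X 0 * MvPolynomial.X 1 - TT (quad μ⁻¹ (-(4⁻¹ * μ⁻¹))) ∈ J := by
    rw [hJdef]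
    refine Ideal.mem_span_pair.mpr ⟨MvPolynomial.C (2⁻¹ * μ⁻¹), -MvPolynomial.C (4⁻¹ * μ⁻¹), ?_⟩
    rw [hfdef, hgdef, TT_quad, map_neg]
    linear_combination (MvPolynomial.X 0 * MvPolynomial.X 1) * hMμ
      + (MvPolynomial.X 0 ^ 2 + MvPolynomial.X 1 ^ 2 - 1) * hMd - (MvPolynomial.X 2 ^ 2) * hMb
  have m3 : MvPolynomial.X 0 ^ 3 - (TT (quad 2 2⁻¹) * MvPolynomial.X 0 - TT (quad μ⁻¹ (-(4⁻¹ * μ⁻¹))) * MvPolynomial.X 1) ∈ J := by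
    have e : MvPolynomial.X 0 ^ 3 - (TT (quad 2 2⁻¹) * MvPolynomial.X 0 - TT (quad μ⁻¹ (-(4⁻¹ * μ⁻¹))) * MvPolynomial.X 1)
        = MvPolynomial.X 0 * (MvPolynomial.X 0 ^ 2 + MvPolynomial.X 1 ^ 2 - TT (quad 2 2⁻¹))
          - MvPolynomial.X 1 * (MvPolynomial.X 0 * MvPolynomial.X 1 - TT (quad μ⁻¹ (-(4⁻¹ * μ⁻¹)))) := by ring
    rw [e]
    exact J.sub_mem (J.mul_mem_left _ m1) (J.mul_mem_left _ m2)
  have m4 : MvPolynomial.X 0 ^ 2 * MvPolynomial.X 1 - TT (quad μ⁻¹ (-(4⁻¹ * μ⁻¹))) * MvPolynomial.X 0 ∈ J := by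
    have e : MvPolynomial.X 0 ^ 2 * MvPolynomial.X 1 - TT (quad μ⁻¹ (-(4⁻¹ * μ⁻¹))) * MvPolynomial.X 0
        = MvPolynomial.X 0 * (MvPolynomial.X 0 * MvPolynomial.X 1 - TT (quad μ⁻¹ (-(4⁻¹ * μ⁻¹)))) := by ring
    rw [e]
    exact J.mul_mem_left _ m2
  -- normal form
  have NFF : ∀ P : MvPolynomial (Fin 3) ℂ, ∃ s0 s1 s2 s3 : Polynomial ℂ,
      P - (TT s0 + TT s1 * MvPolynomial.X 0 + TT s2 * MvPolynomial.X 0 ^ 2 + TT s3 * MvPolynomial.X 1) ∈ J := by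
    intro P
    induction P using MvPolynomial.induction_on with
    | C r =>
        refine ⟨Polynomial.C r, 0, 0, 0, ?_⟩
        have e1 : TT (Polynomial.C r) = MvPolynomial.C r := by simp [TT]
        rw [e1, map_zero, zero_mul, zero_mul, zero_mul, add_zero, add_zero, add_zero,
          sub_self]
        exact J.zero_mem
    | add p q hp hq =>
        obtain ⟨p0, p1, p2, p3, hpm⟩ := hp
        obtain ⟨r0, r1, r2, r3, hqm⟩ := hq
        refine ⟨p0 + r0, p1 + r1, p2 + r2, p3 + r3, ?_⟩
        have e : p + q - (TT (p0 + r0) + TT (p1 + r1) * MvPolynomial.X 0 + TT (p2 + r2) * MvPolynomial.X 0 ^ 2 + TT (p3 + r3) * MvPolynomial.X 1)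
            = (p - (TT p0 + TT p1 * MvPolynomial.X 0 + TT p2 * MvPolynomial.X 0 ^ 2 + TT p3 * MvPolynomial.X 1)) + (q - (TT r0 + TT r1 * MvPolynomial.X 0 + TT r2 * MvPolynomial.X 0 ^ 2 + TT r3 * MvPolynomial.X 1)) := by
          simp only [map_add]; ring
        rw [e]
        exact J.add_mem hpm hqm
    | mul_X p i hp =>
        obtain ⟨p0, p1, p2, p3, hpm⟩ := hp
        fin_cases i
        · show ∃ s0 s1 s2 s3 : Polynomial ℂ, p * MvPolynomial.X 0 - (TT s0 + TT s1 * MvPolynomial.X 0 + TT s2 * MvPolynomial.X 0 ^ 2 + TT s3 * MvPolynomial.X 1) ∈ J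
          refine ⟨(quad μ⁻¹ (-(4⁻¹ * μ⁻¹))) * p3, p0 + (quad 2 2⁻¹) * p2, p1, -((quad μ⁻¹ (-(4⁻¹ * μ⁻¹))) * p2), ?_⟩
          have e : p * MvPolynomial.X 0 - (TT ((quad μ⁻¹ (-(4⁻¹ * μ⁻¹))) * p3) + TT (p0 + (quad 2 2⁻¹) * p2) * MvPolynomial.X 0 + TT p1 * MvPolynomial.X 0 ^ 2 + TT (-((quad μ⁻¹ (-(4⁻¹ * μ⁻¹))) * p2)) * MvPolynomial.X 1)
              = (p - (TT p0 + TT p1 * MvPolynomial.X 0 + TT p2 * MvPolynomial.X 0 ^ 2 + TT p3 * MvPolynomial.X 1)) * MvPolynomial.X 0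
                + TT p2 * (MvPolynomial.X 0 ^ 3 - (TT (quad 2 2⁻¹) * MvPolynomial.X 0 - TT (quad μ⁻¹ (-(4⁻¹ * μ⁻¹))) * MvPolynomial.X 1))
                + TT p3 * (MvPolynomial.X 0 * MvPolynomial.X 1 - TT (quad μ⁻¹ (-(4⁻¹ * μ⁻¹)))) := by
            simp only [map_add, map_mul, map_neg]; ring
          rw [e]
          exact J.add_mem (J.add_mem (J.mul_mem_right _ hpm) (J.mul_mem_left _ m3))
            (J.mul_mem_left _ m2)
        · show ∃ s0 s1 s2 s3 : Polynomial ℂ, p * MvPolynomial.X 1 - (TT s0 + TT s1 * MvPolynomial.X 0 + TT s2 * MvPolynomial.X 0 ^ 2 + TT s3 * MvPolynomial.X 1) ∈ J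
          refine ⟨(quad μ⁻¹ (-(4⁻¹ * μ⁻¹))) * p1 + (quad 2 2⁻¹) * p3, (quad μ⁻¹ (-(4⁻¹ * μ⁻¹))) * p2, -p3, p0, ?_⟩
          have e : p * MvPolynomial.X 1 - (TT ((quad μ⁻¹ (-(4⁻¹ * μ⁻¹))) * p1 + (quad 2 2⁻¹) * p3) + TT ((quad μ⁻¹ (-(4⁻¹ * μ⁻¹))) * p2) * MvPolynomial.X 0 + TT (-p3) * MvPolynomial.X 0 ^ 2 + TT p0 * MvPolynomial.X 1)
              = (p - (TT p0 + TT p1 * MvPolynomial.X 0 + TT p2 * MvPolynomial.X 0 ^ 2 + TT p3 * MvPolynomial.X 1)) * MvPolynomial.X 1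
                + TT p1 * (MvPolynomial.X 0 * MvPolynomial.X 1 - TT (quad μ⁻¹ (-(4⁻¹ * μ⁻¹))))
                + TT p2 * (MvPolynomial.X 0 ^ 2 * MvPolynomial.X 1 - TT (quad μ⁻¹ (-(4⁻¹ * μ⁻¹))) * MvPolynomial.X 0)
                + TT p3 * (MvPolynomial.X 0 ^ 2 + MvPolynomial.X 1 ^ 2 - TT (quad 2 2⁻¹)) := by
            simp only [map_add, map_mul, map_neg]; ring
          rw [e]
          exact J.add_mem (J.add_mem (J.add_mem (J.mul_mem_right _ hpm)
            (J.mul_mem_left _ m2)) (J.mul_mem_left _ m4)) (J.mul_mem_left _ m1)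
        · show ∃ s0 s1 s2 s3 : Polynomial ℂ, p * MvPolynomial.X 2 - (TT s0 + TT s1 * MvPolynomial.X 0 + TT s2 * MvPolynomial.X 0 ^ 2 + TT s3 * MvPolynomial.X 1) ∈ J
          refine ⟨p0 * Polynomial.X, p1 * Polynomial.X, p2 * Polynomial.X, p3 * Polynomial.X, ?_⟩
          have hTX : TT Polynomial.X = MvPolynomial.X 2 := by simp [TT]
          have e : p * MvPolynomial.X 2 - (TT (p0 * Polynomial.X) + TT (p1 * Polynomial.X) * MvPolynomial.X 0 + TT (p2 * Polynomial.X) * MvPolynomial.X 0 ^ 2 + TT (p3 * Polynomial.X) * MvPolynomial.X 1)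
              = (p - (TT p0 + TT p1 * MvPolynomial.X 0 + TT p2 * MvPolynomial.X 0 ^ 2 + TT p3 * MvPolynomial.X 1)) * MvPolynomial.X 2 := by
            simp only [map_mul, hTX]; ring
          rw [e]
          exact J.mul_mem_right _ hpm
  -- kernel is contained in J
  have hker_le : RingHom.ker (Phi (quad a2 a0) (quad b2 b0)) ≤ J := by
    intro P hP
    obtain ⟨s0, s1, s2, s3, hm⟩ := NFF P
    have hNF0 : Phi (quad a2 a0) (quad b2 b0) (TT s0 + TT s1 * MvPolynomial.X 0 + TT s2 * MvPolynomial.X 0 ^ 2 + TT s3 * MvPolynomial.X 1) = 0 := by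
      have h2 : Phi (quad a2 a0) (quad b2 b0) (P - (TT s0 + TT s1 * MvPolynomial.X 0 + TT s2 * MvPolynomial.X 0 ^ 2 + TT s3 * MvPolynomial.X 1)) = 0 := RingHom.mem_ker.mp (hJker hm)
      have h3 : Phi (quad a2 a0) (quad b2 b0) P = 0 := RingHom.mem_ker.mp hP
      rw [map_sub, h3, zero_sub, neg_eq_zero] at h2
      exact h2
    simp only [map_add, map_mul, map_pow, Phi_TT, Phi_X0, Phi_X1] at hNF0
    have hVsq := VV_sq (quad a2 a0) (quad b2 b0)
    have hqr : rho (quad a2 a0) (quad b2 b0) (Polynomial.C 2⁻¹) * rho (quad a2 a0) (quad b2 b0) (Polynomial.C 2⁻¹)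
        = rho (quad a2 a0) (quad b2 b0) (Polynomial.C 4⁻¹) := by
      rw [← map_mul, ← Polynomial.C_mul, show (2⁻¹ * 2⁻¹ : ℂ) = 4⁻¹ by norm_num]
    have h2r : rho (quad a2 a0) (quad b2 b0) (Polynomial.C 2⁻¹) * 2 = 1 := by
      have h := map_ofNat (rho (quad a2 a0) (quad b2 b0)) 2
      have hC2 : (Polynomial.C (2 : ℂ)) = (2 : Polynomial ℂ) := map_ofNat _ 2
      rw [← h, ← hC2, ← map_mul, ← Polynomial.C_mul]
      norm_num
    have hkap_half : kap (quad a2 a0) (quad b2 b0) 2⁻¹ = rho (quad a2 a0) (quad b2 b0) (Polynomial.C 2⁻¹) := rfl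
    have hUUu : i2 (quad a2 a0) (quad b2 b0) (AdjoinRoot.root (X ^ 2 - C (wA (quad a2 a0)))) = UU (quad a2 a0) (quad b2 b0) := rfl
    have hsplit : i2 (quad a2 a0) (quad b2 b0) (i1 (quad a2 a0) (wA s0 + wA (Polynomial.C 4⁻¹) * wA s2 * wA (quad b2 b0))
          + i1 (quad a2 a0) (wA (Polynomial.C 2⁻¹) * (wA s1 + wA s3)) * AdjoinRoot.root (X ^ 2 - C (wA (quad a2 a0)))
          + i1 (quad a2 a0) (wA (Polynomial.C 4⁻¹) * wA s2) * AdjoinRoot.root (X ^ 2 - C (wA (quad a2 a0))) ^ 2)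
        + i2 (quad a2 a0) (quad b2 b0) (i1 (quad a2 a0) (wA (Polynomial.C 2⁻¹) * (wA s1 - wA s3))
          + i1 (quad a2 a0) (wA (Polynomial.C 2⁻¹) * wA s2) * AdjoinRoot.root (X ^ 2 - C (wA (quad a2 a0)))) * VV (quad a2 a0) (quad b2 b0)
        = rho (quad a2 a0) (quad b2 b0) s0 + rho (quad a2 a0) (quad b2 b0) s1 * (kap (quad a2 a0) (quad b2 b0) 2⁻¹ * (UU (quad a2 a0) (quad b2 b0) + VV (quad a2 a0) (quad b2 b0)))
          + rho (quad a2 a0) (quad b2 b0) s2 * (kap (quad a2 a0) (quad b2 b0) 2⁻¹ * (UU (quad a2 a0) (quad b2 b0) + VV (quad a2 a0) (quad b2 b0))) ^ 2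
          + rho (quad a2 a0) (quad b2 b0) s3 * (kap (quad a2 a0) (quad b2 b0) 2⁻¹ * (UU (quad a2 a0) (quad b2 b0) - VV (quad a2 a0) (quad b2 b0))) := by
      simp only [map_add, map_sub, map_mul, map_pow, ← rho_apply, hUUu, hkap_half]
      linear_combination (-(rho (quad a2 a0) (quad b2 b0) s2 * (UU (quad a2 a0) (quad b2 b0) ^ 2 + VV (quad a2 a0) (quad b2 b0) ^ 2))) * hqr
        - (rho (quad a2 a0) (quad b2 b0) s2 * UU (quad a2 a0) (quad b2 b0) * VV (quad a2 a0) (quad b2 b0) * rho (quad a2 a0) (quad b2 b0) (Polynomial.C 2⁻¹)) * h2r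
        - (rho (quad a2 a0) (quad b2 b0) s2 * rho (quad a2 a0) (quad b2 b0) (Polynomial.C 4⁻¹)) * hVsq
    have hfinal : i2 (quad a2 a0) (quad b2 b0) (i1 (quad a2 a0) (wA s0 + wA (Polynomial.C 4⁻¹) * wA s2 * wA (quad b2 b0))
          + i1 (quad a2 a0) (wA (Polynomial.C 2⁻¹) * (wA s1 + wA s3)) * AdjoinRoot.root (X ^ 2 - C (wA (quad a2 a0)))
          + i1 (quad a2 a0) (wA (Polynomial.C 4⁻¹) * wA s2) * AdjoinRoot.root (X ^ 2 - C (wA (quad a2 a0))) ^ 2)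
        + i2 (quad a2 a0) (quad b2 b0) (i1 (quad a2 a0) (wA (Polynomial.C 2⁻¹) * (wA s1 - wA s3))
          + i1 (quad a2 a0) (wA (Polynomial.C 2⁻¹) * wA s2) * AdjoinRoot.root (X ^ 2 - C (wA (quad a2 a0)))) * VV (quad a2 a0) (quad b2 b0) = 0 := by
      linear_combination hsplit + hNF0
    obtain ⟨hcz0, hcz1⟩ := indep_adjoinRoot (AdjoinRoot.of (X ^ 2 - C (wA (quad a2 a0))) (wA (quad b2 b0))) hfinal
    obtain ⟨e10, e11⟩ := indep_adjoinRoot (wA (quad a2 a0)) hcz1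
    have hu2 : AdjoinRoot.root (X ^ 2 - C (wA (quad a2 a0))) ^ 2 = i1 (quad a2 a0) (wA (quad a2 a0)) := root_sq (wA (quad a2 a0))
    rw [hu2] at hcz0
    simp only [map_add, map_sub, map_mul] at hcz0
    have hcz0' : i1 (quad a2 a0) ((wA s0 + wA (Polynomial.C 4⁻¹) * wA s2 * wA (quad b2 b0))
          + wA (Polynomial.C 4⁻¹) * wA s2 * wA (quad a2 a0))
        + i1 (quad a2 a0) (wA (Polynomial.C 2⁻¹) * (wA s1 + wA s3)) * AdjoinRoot.root (X ^ 2 - C (wA (quad a2 a0))) = 0 := by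
      simp only [map_add, map_sub, map_mul]
      linear_combination hcz0
    obtain ⟨e00, e01⟩ := indep_adjoinRoot (wA (quad a2 a0)) hcz0'
    have winj : Function.Injective (algebraMap (Polynomial ℂ) K0) :=
      IsFractionRing.injective _ _
    have E11 : Polynomial.C (2⁻¹ : ℂ) * s2 = 0 := by
      apply winj
      rw [map_mul, map_zero]
      exact e11
    have hs2z : s2 = 0 := by
      rcases mul_eq_zero.mp E11 with h | h
      · exact absurd h (Polynomial.C_ne_zero.mpr (by norm_num))
      · exact h
    have E10 : Polynomial.C (2⁻¹ : ℂ) * (s1 - s3) = 0 := by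
      apply winj
      rw [map_mul, map_sub, map_zero]
      exact e10
    have E01 : Polynomial.C (2⁻¹ : ℂ) * (s1 + s3) = 0 := by
      apply winj
      rw [map_mul, map_add, map_zero]
      exact e01
    have hs13 : s1 - s3 = 0 := by
      rcases mul_eq_zero.mp E10 with h | h
      · exact absurd h (Polynomial.C_ne_zero.mpr (by norm_num))
      · exact h
    have hs13' : s1 + s3 = 0 := by
      rcases mul_eq_zero.mp E01 with h | h
      · exact absurd h (Polynomial.C_ne_zero.mpr (by norm_num))
      · exact h
    have h2s1 : (2 : Polynomial ℂ) * s1 = 0 := by linear_combination hs13 + hs13'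
    have hs1z : s1 = 0 := by
      rcases mul_eq_zero.mp h2s1 with h | h
      · exact absurd h two_ne_zero
      · exact h
    have hs3z : s3 = 0 := by linear_combination hs13' - hs1z
    have E00 : s0 + Polynomial.C (4⁻¹ : ℂ) * s2 * (quad b2 b0)
        + Polynomial.C (4⁻¹ : ℂ) * s2 * (quad a2 a0) = 0 := by
      apply winj
      simp only [map_add, map_mul, map_zero]
      exact e00
    have hs0z : s0 = 0 := by
      rw [hs2z] at E00
      simpa using E00
    rw [hs0z, hs1z, hs2z, hs3z] at hm
    simpa using hm
  have hkerJ : RingHom.ker (Phi (quad a2 a0) (quad b2 b0)) = J := le_antisymm hker_le hJker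
  rw [← hkerJ]
  exact RingHom.ker_isPrime _

end CurveX1

open MvPolynomial

/-- For rational `λ ≠ 0` with `λ² < 1`, the affine curve `X₁ ⊂ ℂ³` defined by
`1 − x² − y² + 2λxy = 0` and `4t² − 2x² − 2y² + 1 = 0` is irreducible: the zero
locus of the ideal generated by these two polynomials in `Spec ℂ[x, y, t]` is an
irreducible closed set. -/
theorem curve_X1_irreducible (l : ℚ) (hl0 : l ≠ 0) (hl1 : l ^ 2 < 1) :
    IsIrreducible (PrimeSpectrum.zeroLocus
      ({1 - X 0 ^ 2 - X 1 ^ 2 + 2 * C (l : ℂ) * X 0 * X 1,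
        4 * X 2 ^ 2 - 2 * X 0 ^ 2 - 2 * X 1 ^ 2 + 1} :
        Set (MvPolynomial (Fin 3) ℂ))) := by
  have hμ0 : ((l : ℂ)) ≠ 0 := by exact_mod_cast hl0
  have hl1' : l ≠ 1 := by rintro rfl; norm_num at hl1
  have hlm1 : l ≠ -1 := by rintro rfl; norm_num at hl1
  have hμ1 : ((l : ℂ)) ≠ 1 := by exact_mod_cast hl1'
  have hμm1 : ((l : ℂ)) ≠ -1 := by
    intro h
    exact hlm1 (by exact_mod_cast h)
  have ha2 : (2 + 2 * ((l:ℂ))⁻¹) ≠ 0 := by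
    intro h
    apply hμm1
    field_simp at h
    linear_combination h / 2
  have ha0 : (2⁻¹ - 2⁻¹ * ((l:ℂ))⁻¹) ≠ 0 := by
    intro h
    apply hμ1
    field_simp at h
    linear_combination h
  have hb2 : (2 - 2 * ((l:ℂ))⁻¹) ≠ 0 := by
    intro h
    apply hμ1
    field_simp at h
    linear_combination h / 2
  have hb0 : (2⁻¹ + 2⁻¹ * ((l:ℂ))⁻¹) ≠ 0 := by
    intro h
    apply hμm1
    field_simp at h
    linear_combination h
  have he : (2 + 2 * ((l:ℂ))⁻¹) * (2⁻¹ + 2⁻¹ * ((l:ℂ))⁻¹)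
      - (2⁻¹ - 2⁻¹ * ((l:ℂ))⁻¹) * (2 - 2 * ((l:ℂ))⁻¹) ≠ 0 := by
    have hval : (2 + 2 * ((l:ℂ))⁻¹) * (2⁻¹ + 2⁻¹ * ((l:ℂ))⁻¹)
        - (2⁻¹ - 2⁻¹ * ((l:ℂ))⁻¹) * (2 - 2 * ((l:ℂ))⁻¹) = 4 * ((l:ℂ))⁻¹ := by
      field_simp
      ring
    rw [hval]
    exact mul_ne_zero (by norm_num) (inv_ne_zero hμ0)
  have hs2 : (2 + 2 * ((l:ℂ))⁻¹) + (2 - 2 * ((l:ℂ))⁻¹) = 4 := by ring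
  have hs0 : (2⁻¹ - 2⁻¹ * ((l:ℂ))⁻¹) + (2⁻¹ + 2⁻¹ * ((l:ℂ))⁻¹) = 1 := by ring
  have hd2 : (l:ℂ) * ((2 + 2 * ((l:ℂ))⁻¹) - (2 - 2 * ((l:ℂ))⁻¹)) = 4 := by
    field_simp
    norm_num
  have hd0 : (l:ℂ) * ((2⁻¹ - 2⁻¹ * ((l:ℂ))⁻¹) - (2⁻¹ + 2⁻¹ * ((l:ℂ))⁻¹)) = -1 := by
    field_simp
    ring
  have hp := CurveX1.span_fg_prime ((l:ℂ)) (2 + 2 * ((l:ℂ))⁻¹) (2⁻¹ - 2⁻¹ * ((l:ℂ))⁻¹)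
    (2 - 2 * ((l:ℂ))⁻¹) (2⁻¹ + 2⁻¹ * ((l:ℂ))⁻¹) hμ0 ha2 ha0 hb2 hb0 he hs2 hs0 hd2 hd0
  rw [← PrimeSpectrum.zeroLocus_span]
  exact (PrimeSpectrum.isIrreducible_zeroLocus_iff _).mpr (hp.radical.symm ▸ hp)
end CurveX1Main
end CurveX1Part3
end CurveX1Tower
end CurveX1Aux
end
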